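/- arXiv:1411.1095 — 8 statements merged into one kernel-verified Lean document; each statement's English description precedes it below -/
import Mathlib

section
/- In the cocycle setting, let A = lim_{n→∞} (1/n)∫_X d(y, a_n(x)y) dμ(x). Then for μ-almost every x ∈ X, lim_{n→∞} (1/n)·d(y, a_n(x)y) = A. -/
open Set Filter MeasureTheory

/-- A geodesic path of length `l`: an isometric map from `[0, l] ⊆ ℝ` into `Y`. -/
def IsGeodesicPath {Y : Type*} [MetricSpace Y] (l : ℝ) (γ : ℝ → Y) : Prop :=
  ∀ s ∈ Set.Icc (0:ℝ) l, ∀ t ∈ Set.Icc (0:ℝ) l, dist (γ s) (γ t) = |s - t|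

/-- A geodesic path joining `x` to `y`, parametrized on `[0, dist x y]`. -/
def IsGeodesicFromTo {Y : Type*} [MetricSpace Y] (x y : Y) (γ : ℝ → Y) : Prop :=
  IsGeodesicPath (dist x y) γ ∧ γ 0 = x ∧ γ (dist x y) = y

/-- A geodesic space: every two points are joined by a geodesic path. -/
def GeodesicSpace (Y : Type*) [MetricSpace Y] : Prop :=
  ∀ x y : Y, ∃ γ : ℝ → Y, IsGeodesicFromTo x y γ

/-- `m` is a midpoint of a geodesic segment from `x` to `y`. -/
def IsMidpointOf {Y : Type*} [MetricSpace Y] (x y m : Y) : Prop :=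
  ∃ γ : ℝ → Y, IsGeodesicFromTo x y γ ∧ γ (dist x y / 2) = m

/-- `p` belongs to a geodesic segment `[x, y]`. -/
def OnGeodesicSegment {Y : Type*} [MetricSpace Y] (x y p : Y) : Prop :=
  ∃ γ : ℝ → Y, IsGeodesicFromTo x y γ ∧ ∃ t ∈ Set.Icc (0:ℝ) (dist x y), γ t = p

/-- The modulus of convexity `δ_Y(a, r, ε)` (infimum over the empty set taken to be `1`). -/
noncomputable def convMod (Y : Type*) [MetricSpace Y] (a : Y) (r ε : ℝ) : ℝ :=
  sInf ({1} ∪ {u : ℝ | ∃ x y m : Y, dist a x ≤ r ∧ dist a y ≤ r ∧ ε * r ≤ dist x y ∧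
    IsMidpointOf x y m ∧ u = 1 - dist a m / r})

/-- `Y` is weakly uniformly convex: `δ_Y(a, r, ε) > 0` for all `a ∈ Y`, `r > 0`, `ε ∈ (0, 2]`. -/
def WeaklyUniformlyConvex (Y : Type*) [MetricSpace Y] : Prop :=
  ∀ (a : Y) (r ε : ℝ), 0 < r → ε ∈ Set.Ioc (0:ℝ) 2 → 0 < convMod Y a r ε

/-- Condition (1): for every `a ∈ Y`, `ε > 0` there is `s > 0` with `inf_{r ≥ s} δ_Y(a,r,ε) > 0`. -/
def CondOne (Y : Type*) [MetricSpace Y] : Prop :=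
  ∀ (a : Y) (ε : ℝ), 0 < ε → ∃ s > (0:ℝ), 0 < sInf {u : ℝ | ∃ r ≥ s, u = convMod Y a r ε}

/-- Busemann convexity. -/
def BusemannConvex (Y : Type*) [MetricSpace Y] : Prop :=
  ∀ (l₁ l₂ : ℝ) (γ₁ γ₂ : ℝ → Y), 0 ≤ l₁ → 0 ≤ l₂ →
    IsGeodesicPath l₁ γ₁ → IsGeodesicPath l₂ γ₂ → γ₁ 0 = γ₂ 0 →
    ∀ t ∈ Set.Icc (0:ℝ) 1, dist (γ₁ (t * l₁)) (γ₂ (t * l₂)) ≤ t * dist (γ₁ l₁) (γ₂ l₂)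

/-- A geodesic ray: an isometric map from `[0, ∞)` into `Y`. -/
def IsGeodesicRay {Y : Type*} [MetricSpace Y] (γ : ℝ → Y) : Prop :=
  ∀ s t : ℝ, 0 ≤ s → 0 ≤ t → dist (γ s) (γ t) = |s - t|

/-!
Since the maps `aₙ(x)` are nonexpansive on `D`, `fₙ(x) = d(y, aₙ(x) y)` is a nonnegative
subadditive cocycle over `T`, and the theorem is Kingman's subadditive ergodic theorem. Growth
rates are taken in `EReal`, as `linearGrowthInf` and `linearGrowthSup`.

Lower bound: `liminf fₙ(x)/n` is subinvariant under `T`, hence a.e. equal to a constant `c`. If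
`c < β < A`, cut an orbit segment into stretches of length `k ≤ K` with `f_k ≤ β k`, and single
steps at points of the set `E_K` where no such `k` exists. This gives
`∫ f_N ≤ β N + N ∫_{E_K} f₁ + K ∫ f₁`; as `E_K` decreases to a null set, this forces `A ≤ β`.

Upper bound: splitting `[0, n)` into blocks of length `m` gives
`m fₙ ≤ Σ_{j<n} f_m ∘ Tʲ + boundary terms`, so Birkhoff's theorem for `f_m` yields
`limsup fₙ/n ≤ (∫ f_m)/m → A`. Birkhoff's theorem is itself the additive case of the lower bound
together with `limsup Sₙ g/n ≤ ∫ g`, which follows from the maximal ergodic theorem.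
-/

open LinearGrowth Topology

namespace LinearGrowth

lemma linearGrowthInf_coe (u : ℕ → ℝ) :
    linearGrowthInf (fun n ↦ (u n : EReal)) = liminf (fun n ↦ ((u n / n : ℝ) : EReal)) atTop := by
  simp only [linearGrowthInf, EReal.coe_div, EReal.coe_natCast]

lemma linearGrowthSup_coe (u : ℕ → ℝ) :
    linearGrowthSup (fun n ↦ (u n : EReal)) = limsup (fun n ↦ ((u n / n : ℝ) : EReal)) atTop := by
  simp only [linearGrowthSup, EReal.coe_div, EReal.coe_natCast]

lemma measurable_linearGrowthInf_coe {X : Type*} [MeasurableSpace X] {u : ℕ → X → ℝ}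
    (hu : ∀ n, Measurable (u n)) : Measurable fun x ↦ linearGrowthInf fun n ↦ (u n x : EReal) := by
  simp only [linearGrowthInf_coe]
  exact Measurable.liminf fun n ↦ measurable_coe_real_ereal.comp ((hu n).div_const _)

lemma measurable_linearGrowthSup_coe {X : Type*} [MeasurableSpace X] {u : ℕ → X → ℝ}
    (hu : ∀ n, Measurable (u n)) : Measurable fun x ↦ linearGrowthSup fun n ↦ (u n x : EReal) := by
  simp only [linearGrowthSup_coe]
  exact Measurable.limsup fun n ↦ measurable_coe_real_ereal.comp ((hu n).div_const _)

lemma tendsto_div_of_le_linearGrowthInf_of_linearGrowthSup_le {u : ℕ → ℝ} {a : ℝ}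
    (hinf : (a : EReal) ≤ linearGrowthInf fun n ↦ (u n : EReal))
    (hsup : (linearGrowthSup fun n ↦ (u n : EReal)) ≤ a) :
    Tendsto (fun n ↦ u n / n) atTop (𝓝 a) := by
  rw [linearGrowthInf_coe] at hinf
  rw [linearGrowthSup_coe] at hsup
  exact EReal.tendsto_coe.1 (tendsto_of_le_liminf_of_limsup_le hinf hsup)

lemma linearGrowthSup_coe_le_of_tendsto {u v : ℕ → ℝ} {a : ℝ}
    (huv : ∀ᶠ n in atTop, u n / n ≤ v n) (hv : Tendsto v atTop (𝓝 a)) :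
    (linearGrowthSup fun n ↦ (u n : EReal)) ≤ a := by
  rw [linearGrowthSup_coe]
  exact (limsup_le_limsup (huv.mono fun n h ↦ EReal.coe_le_coe_iff.2 h)).trans_eq
    (EReal.tendsto_coe.2 hv).limsup_eq

lemma tendsto_natCast_succ_div_atTop :
    Tendsto (fun n : ℕ ↦ ((n + 1 : ℕ) : EReal) / n) atTop (𝓝 1) := by
  have h : Tendsto (fun n : ℕ ↦ 1 + 1 / (n : ℝ)) atTop (𝓝 1) := by
    simpa using tendsto_one_div_atTop_nhds_zero_nat.const_add (1 : ℝ)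
  refine (EReal.tendsto_coe.2 h).congr' ?_
  filter_upwards [eventually_ne_atTop 0] with n hn
  rw [← EReal.coe_natCast, ← EReal.coe_natCast, ← EReal.coe_div]
  congr 1
  field_simp
  push_cast
  ring

lemma linearGrowthInf_le_comp_succ {u : ℕ → EReal} (hu : 0 ≤ u) :
    linearGrowthInf u ≤ linearGrowthInf fun n ↦ u (n + 1) := by
  have := le_linearGrowthInf_comp (u := u) (v := fun n ↦ n + 1) (Eventually.of_forall hu)
    (tendsto_add_atTop_nat 1)
  rwa [linearGrowthInf, tendsto_natCast_succ_div_atTop.liminf_eq, one_mul] at this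

lemma _root_.Monotone.linearGrowthSup_comp_succ {u : ℕ → EReal} (hu : Monotone u) :
    (linearGrowthSup fun n ↦ u (n + 1)) = linearGrowthSup u := by
  have := hu.linearGrowthSup_comp (v := fun n ↦ n + 1) tendsto_natCast_succ_div_atTop
    one_ne_zero (EReal.coe_ne_top 1)
  rwa [one_mul] at this

end LinearGrowth

lemma tendsto_sub_sub_div_of_tendsto_div {u : ℕ → ℝ} {a : ℝ}
    (hu : Tendsto (fun n ↦ u n / n) atTop (𝓝 a)) (m : ℕ) :
    Tendsto (fun n ↦ (u n - u (n - m)) / n) atTop (𝓝 0) := by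
  have hratio : Tendsto (fun n : ℕ ↦ ((n - m : ℕ) : ℝ) / n) atTop (𝓝 1) := by
    have := (tendsto_const_div_atTop_nhds_zero_nat (m : ℝ)).const_sub (1 : ℝ)
    rw [sub_zero] at this
    refine this.congr' ((eventually_ge_atTop (m + 1)).mono fun n hn ↦ ?_)
    have hn' : (n : ℝ) ≠ 0 := Nat.cast_ne_zero.2 (by omega)
    dsimp only
    rw [Nat.cast_sub (by omega)]
    field_simp
  have hshift := (hu.comp (tendsto_sub_atTop_nat m)).mul hratio
  rw [mul_one] at hshift
  have hdiff := hu.sub hshift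
  rw [sub_self] at hdiff
  refine hdiff.congr' ?_
  filter_upwards [eventually_ge_atTop (m + 1)] with n hn
  have hnm : ((n - m : ℕ) : ℝ) ≠ 0 := by rw [Nat.cast_ne_zero]; omega
  simp only [Function.comp_apply]
  rw [div_mul_div_cancel₀ hnm, sub_div]

lemma Ergodic.exists_ae_eq_const_of_le_comp {X : Type*} [MeasurableSpace X] {μ : Measure X}
    [IsFiniteMeasure μ] {T : X → X} (hT : Ergodic T μ) {φ : X → EReal} (hφ : Measurable φ)
    (h : ∀ x, φ x ≤ φ (T x)) : ∃ c, φ =ᵐ[μ] fun _ ↦ c := by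
  have hsuper (q : ℚ) : ∀ᵐ x ∂μ, ((q : ℝ) : EReal) < φ (T x) → ((q : ℝ) : EReal) < φ x := by
    have hs : MeasurableSet {x | ((q : ℝ) : EReal) < φ x} :=
      measurableSet_lt measurable_const hφ
    have heq := ae_eq_of_ae_subset_of_measure_ge
      (Eventually.of_forall fun x (hx : ((q : ℝ) : EReal) < φ x) ↦ hx.trans_le (h x))
      (hT.measure_preimage hs.nullMeasurableSet).le hs.nullMeasurableSet (measure_ne_top _ _)
    exact heq.mono fun x hx ↦ hx.mpr
  refine hT.ae_eq_const_of_ae_eq_comp₀ hφ.nullMeasurable ?_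
  filter_upwards [ae_all_iff.2 hsuper] with x hx
  refine le_antisymm ?_ (h x)
  by_contra! hlt
  obtain ⟨q, hxq, hqT⟩ := EReal.lt_iff_exists_rat_btwn.1 hlt
  exact (hx q hqT).not_ge hxq.le

section BirkhoffSum

variable {X : Type*} {T : X → X} {g : X → ℝ}

lemma birkhoffSum_nonneg (hg : ∀ x, 0 ≤ g x) (n : ℕ) (x : X) : 0 ≤ birkhoffSum T g n x :=
  Finset.sum_nonneg fun _ _ ↦ hg _

lemma monotone_birkhoffSum (hg : ∀ x, 0 ≤ g x) (x : X) :
    Monotone fun n ↦ birkhoffSum T g n x := fun _ _ h ↦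
  Finset.sum_le_sum_of_subset_of_nonneg (Finset.range_subset_range.2 h) fun _ _ _ ↦ hg _

noncomputable def birkhoffMax (T : X → X) (g : X → ℝ) (N : ℕ) : X → ℝ :=
  (Finset.range (N + 1)).sup' Finset.nonempty_range_add_one fun n ↦ birkhoffSum T g n

lemma birkhoffSum_le_birkhoffMax {n N : ℕ} (h : n ≤ N) (x : X) :
    birkhoffSum T g n x ≤ birkhoffMax T g N x := by
  rw [birkhoffMax, Finset.sup'_apply]
  exact Finset.le_sup' (fun n ↦ birkhoffSum T g n x) (Finset.mem_range.2 (by omega))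

lemma birkhoffMax_nonneg (N : ℕ) (x : X) : 0 ≤ birkhoffMax T g N x := by
  simpa using birkhoffSum_le_birkhoffMax (T := T) (g := g) (Nat.zero_le N) x

lemma birkhoffMax_mono : Monotone (birkhoffMax T g) := fun _ _ h x ↦ by
  simp only [birkhoffMax, Finset.sup'_apply]
  exact Finset.sup'_mono _ (Finset.range_subset_range.2 (by omega)) _

lemma exists_birkhoffSum_eq_birkhoffMax (N : ℕ) (x : X) :
    ∃ n ≤ N, birkhoffSum T g n x = birkhoffMax T g N x := by
  obtain ⟨n, hn, h⟩ := Finset.exists_mem_eq_sup' Finset.nonempty_range_add_one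
    fun n ↦ birkhoffSum T g n x
  rw [birkhoffMax, Finset.sup'_apply, h]
  exact ⟨n, Nat.lt_succ_iff.1 (Finset.mem_range.1 hn), rfl⟩

lemma birkhoffMax_le_add_birkhoffMax_apply {N : ℕ} {x : X} (hx : 0 < birkhoffMax T g N x) :
    birkhoffMax T g N x ≤ g x + birkhoffMax T g N (T x) := by
  obtain ⟨n, hnN, hn⟩ := exists_birkhoffSum_eq_birkhoffMax (T := T) (g := g) N x
  obtain ⟨k, rfl⟩ : ∃ k, n = k + 1 :=
    Nat.exists_eq_succ_of_ne_zero (by rintro rfl; simp_all)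
  rw [← hn, birkhoffSum_succ']
  exact add_le_add le_rfl (birkhoffSum_le_birkhoffMax (by omega) _)

lemma linearGrowthSup_birkhoffSum_le_comp (hg : ∀ x, 0 ≤ g x) (x : X) :
    (linearGrowthSup fun n ↦ ((birkhoffSum T g n x : ℝ) : EReal))
      ≤ linearGrowthSup fun n ↦ ((birkhoffSum T g n (T x) : ℝ) : EReal) := by
  have hmono : Monotone fun n ↦ ((birkhoffSum T g n x : ℝ) : EReal) :=
    fun _ _ h ↦ EReal.coe_le_coe_iff.2 (monotone_birkhoffSum hg x h)
  rw [← hmono.linearGrowthSup_comp_succ]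
  refine linearGrowthSup_le_of_eventually_le (EReal.coe_ne_top (g x))
    (Eventually.of_forall fun n ↦ ?_)
  rw [birkhoffSum_succ', add_comm, EReal.coe_add]

variable [MeasurableSpace X] {μ : Measure X}

lemma Measurable.birkhoffSum (hg : Measurable g) (hT : Measurable T) (n : ℕ) :
    Measurable (birkhoffSum T g n) :=
  Finset.measurable_sum _ fun i _ ↦ hg.comp (hT.iterate i)

lemma Measurable.birkhoffMax (hg : Measurable g) (hT : Measurable T) (N : ℕ) :
    Measurable (birkhoffMax T g N) :=
  Finset.measurable_sup' _ fun n _ ↦ hg.birkhoffSum hT n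

namespace MeasureTheory.MeasurePreserving

lemma integral_comp_of_aestronglyMeasurable {Y : Type*} [MeasurableSpace Y] {ν : Measure Y}
    {f : X → Y} (hf : MeasurePreserving f μ ν) {φ : Y → ℝ} (hφ : AEStronglyMeasurable φ ν) :
    ∫ x, φ (f x) ∂μ = ∫ y, φ y ∂ν := by
  conv_rhs => rw [← hf.map_eq]
  exact (integral_map hf.measurable.aemeasurable (hf.map_eq ▸ hφ)).symm

lemma integrable_birkhoffSum (hT : MeasurePreserving T μ μ) (hg : Integrable g μ) (n : ℕ) :
    Integrable (birkhoffSum T g n) μ :=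
  integrable_finsetSum _ fun i _ ↦ (hT.iterate i).integrable_comp_of_integrable hg

lemma integral_birkhoffSum (hT : MeasurePreserving T μ μ) (hg : Integrable g μ) (n : ℕ) :
    ∫ x, birkhoffSum T g n x ∂μ = n * ∫ x, g x ∂μ := by
  have hcomp (i : ℕ) : ∫ x, g (T^[i] x) ∂μ = ∫ x, g x ∂μ :=
    (hT.iterate i).integral_comp_of_aestronglyMeasurable hg.aestronglyMeasurable
  simp only [birkhoffSum]
  rw [integral_finsetSum (f := fun i x ↦ g (T^[i] x)) _
    fun i _ ↦ (hT.iterate i).integrable_comp_of_integrable hg]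
  simp [hcomp]

lemma integrable_birkhoffMax (hT : MeasurePreserving T μ μ) (hg : Integrable g μ) (N : ℕ) :
    Integrable (birkhoffMax T g N) μ :=
  Finset.sup'_induction (p := fun f ↦ Integrable f μ) _ _ (fun _ h₁ _ h₂ ↦ h₁.sup h₂)
    fun n _ ↦ hT.integrable_birkhoffSum hg n

lemma setIntegral_birkhoffMax_pos_nonneg (hT : MeasurePreserving T μ μ) (hgm : Measurable g)
    (hg : Integrable g μ) (N : ℕ) : 0 ≤ ∫ x in {x | 0 < birkhoffMax T g N x}, g x ∂μ := by
  set M := birkhoffMax T g N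
  set E := {x | 0 < M x}
  have hE : MeasurableSet E :=
    measurableSet_lt measurable_const (hgm.birkhoffMax hT.measurable N)
  have hM : Integrable M μ := hT.integrable_birkhoffMax hg N
  have hMT : Integrable (fun x ↦ M (T x)) μ := hT.integrable_comp_of_integrable hM
  have hM_on_E : ∫ x in E, M x ∂μ = ∫ x, M x ∂μ :=
    setIntegral_eq_integral_of_forall_compl_eq_zero fun x hx ↦
      le_antisymm (not_lt.1 hx) (birkhoffMax_nonneg N x)
  have hMT_on_E : ∫ x in E, M (T x) ∂μ ≤ ∫ x, M x ∂μ :=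
    (setIntegral_le_integral hMT (Eventually.of_forall fun x ↦ birkhoffMax_nonneg N (T x))).trans
      (hT.integral_comp_of_aestronglyMeasurable hM.aestronglyMeasurable).le
  have hmain : ∫ x in E, (M x - M (T x)) ∂μ ≤ ∫ x in E, g x ∂μ :=
    setIntegral_mono_on (hM.sub hMT).integrableOn hg.integrableOn hE fun x hx ↦
      sub_le_iff_le_add.2 (birkhoffMax_le_add_birkhoffMax_apply hx)
  rw [integral_sub hM.integrableOn hMT.integrableOn, hM_on_E] at hmain
  linarith

lemma integral_nonneg_of_ae_exists_birkhoffSum_pos (hT : MeasurePreserving T μ μ)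
    (hgm : Measurable g) (hg : Integrable g μ) (h : ∀ᵐ x ∂μ, ∃ n, 0 < birkhoffSum T g n x) :
    0 ≤ ∫ x, g x ∂μ := by
  set E : ℕ → Set X := fun N ↦ {x | 0 < birkhoffMax T g N x}
  have hE (N : ℕ) : MeasurableSet (E N) :=
    measurableSet_lt measurable_const (hgm.birkhoffMax hT.measurable N)
  have hE_mono : Monotone E := fun N N' hN x (hx : 0 < _) ↦
    hx.trans_le (birkhoffMax_mono hN x)
  have hE_univ : (⋃ N, E N) =ᵐ[μ] (univ : Set X) := by
    refine ae_eq_univ.2 (measure_eq_zero_iff_ae_notMem.2 ?_)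
    filter_upwards [h] with x ⟨n, hn⟩ hx
    exact hx (mem_iUnion.2 ⟨n, hn.trans_le (birkhoffSum_le_birkhoffMax le_rfl x)⟩)
  have := tendsto_setIntegral_of_monotone hE hE_mono hg.integrableOn
  rw [setIntegral_congr_set hE_univ, setIntegral_univ] at this
  exact ge_of_tendsto' this fun N ↦ hT.setIntegral_birkhoffMax_pos_nonneg hgm hg N

end MeasureTheory.MeasurePreserving

lemma Ergodic.ae_linearGrowthSup_birkhoffSum_le [IsProbabilityMeasure μ] (hT : Ergodic T μ)
    (hgm : Measurable g) (hg0 : ∀ x, 0 ≤ g x) (hg : Integrable g μ) :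
    ∀ᵐ x ∂μ, (linearGrowthSup fun n ↦ ((birkhoffSum T g n x : ℝ) : EReal)) ≤ ∫ x, g x ∂μ := by
  obtain ⟨c, hc⟩ := hT.exists_ae_eq_const_of_le_comp
    (measurable_linearGrowthSup_coe fun n ↦ hgm.birkhoffSum hT.measurable n)
    (linearGrowthSup_birkhoffSum_le_comp hg0)
  suffices hc_le : c ≤ ∫ x, g x ∂μ by
    filter_upwards [hc] with x hx
    exact hx.trans_le hc_le
  by_contra! hlt
  obtain ⟨r, hgr, hrc⟩ := EReal.lt_iff_exists_real_btwn.1 hlt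
  rw [EReal.coe_lt_coe_iff] at hgr
  set q := ((∫ x, g x ∂μ) + r) / 2 with hq
  suffices 0 ≤ ∫ x, (g x - q) ∂μ by
    rw [integral_sub hg (integrable_const q), integral_const] at this
    simp only [probReal_univ, smul_eq_mul, one_mul] at this
    linarith
  refine hT.toMeasurePreserving.integral_nonneg_of_ae_exists_birkhoffSum_pos
    (hgm.sub measurable_const) (hg.sub (integrable_const q)) ?_
  filter_upwards [hc] with x hx
  obtain ⟨n, hn, hn1⟩ :=
    ((frequently_mul_le (hrc.trans_eq hx.symm)).and_eventually
      (eventually_ge_atTop 1)).exists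
  have hrn : r * n ≤ birkhoffSum T g n x := by exact_mod_cast hn
  have hqr : q * n < r * n :=
    mul_lt_mul_of_pos_right (by linarith) (by exact_mod_cast hn1)
  refine ⟨n, ?_⟩
  simp only [birkhoffSum, Finset.sum_sub_distrib, Finset.sum_const, Finset.card_range,
    nsmul_eq_mul] at hrn ⊢
  linarith

end BirkhoffSum

structure IsNonnegSubadditiveCocycle {X : Type*} (T : X → X) (f : ℕ → X → ℝ) : Prop where
  zero : ∀ x, f 0 x = 0
  nonneg : ∀ n x, 0 ≤ f n x
  le_add : ∀ m n x, f (m + n) x ≤ f m x + f n (T^[m] x)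

lemma isNonnegSubadditiveCocycle_birkhoffSum {X : Type*} {T : X → X} {g : X → ℝ}
    (hg : ∀ x, 0 ≤ g x) : IsNonnegSubadditiveCocycle T (birkhoffSum T g) where
  zero := birkhoffSum_zero T g
  nonneg := birkhoffSum_nonneg hg
  le_add m n x := (birkhoffSum_add T g m n x).le

def exceedanceSet {X : Type*} (f : ℕ → X → ℝ) (β : ℝ) (K : ℕ) : Set X :=
  {z | ∀ n ∈ Finset.Icc 1 K, β * n < f n z}

lemma antitone_exceedanceSet {X : Type*} (f : ℕ → X → ℝ) (β : ℝ) :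
    Antitone (exceedanceSet f β) := fun _ _ hK _ hz n hn ↦
  hz n (Finset.Icc_subset_Icc le_rfl hK hn)

lemma measurableSet_exceedanceSet {X : Type*} [MeasurableSpace X] {f : ℕ → X → ℝ}
    (hfm : ∀ n, Measurable (f n)) (β : ℝ) (K : ℕ) : MeasurableSet (exceedanceSet f β K) := by
  simp only [exceedanceSet, ofPred_forall]
  exact Finset.measurableSet_biInter _ fun n _ ↦ measurableSet_lt measurable_const (hfm n)

namespace IsNonnegSubadditiveCocycle

section Pointwise

variable {X : Type*} {T : X → X} {f : ℕ → X → ℝ}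

lemma le_birkhoffSum (hf : IsNonnegSubadditiveCocycle T f) (n : ℕ) (x : X) :
    f n x ≤ birkhoffSum T (f 1) n x := by
  induction n with
  | zero => simp [hf.zero]
  | succ n ih =>
    rw [birkhoffSum_succ]
    exact (hf.le_add n 1 x).trans (add_le_add_left ih _)

lemma le_add_birkhoffSum_indicator_add_sub (hf : IsNonnegSubadditiveCocycle T f) {β : ℝ}
    (hβ : 0 ≤ β) (K N : ℕ) (x : X) :
    f N x ≤ β * N + birkhoffSum T ((exceedanceSet f β K).indicator (f 1)) N x
      + (birkhoffSum T (f 1) N x - birkhoffSum T (f 1) (N - K) x) := by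
  set E := exceedanceSet f β K
  have hind (z : X) : 0 ≤ E.indicator (f 1) z :=
    Set.indicator_nonneg (fun z _ ↦ hf.nonneg 1 z) z
  induction N using Nat.strong_induction_on generalizing x with
  | _ N ih =>
  rcases Nat.eq_zero_or_pos N with rfl | hN
  · simp [hf.zero]
  -- Either jump ahead by a `k ≤ K` with `f k x ≤ β k`, or advance by one step and pay `f 1 x`,
  -- which is then covered by the indicator (`x ∈ E`) or by the last term (`N ≤ K`).
  by_cases hstop : ∃ k ∈ Finset.Icc 1 (min K N), f k x ≤ β * k
  · obtain ⟨k, hk, hfk⟩ := hstop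
    simp only [Finset.mem_Icc, le_min_iff] at hk
    obtain ⟨hk1, -, hkN⟩ := hk
    have hsplit := hf.le_add k (N - k) x
    have hS_split := birkhoffSum_add T (f 1) k (N - k) x
    have hB_split := birkhoffSum_add T (E.indicator (f 1)) k (N - k) x
    rw [Nat.add_sub_cancel' hkN] at hsplit hS_split hB_split
    have hrest := ih (N - k) (by omega) (T^[k] x)
    have hS_head := birkhoffSum_add T (f 1) k (N - k - K) x
    have hS_mono := monotone_birkhoffSum (T := T) (hf.nonneg 1) x
      (show N - K ≤ k + (N - k - K) by omega)
    have hβN : β * k + β * ↑(N - k) = β * N := by rw [Nat.cast_sub hkN]; ring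
    linarith [birkhoffSum_nonneg (T := T) hind k x]
  · push Not at hstop
    obtain ⟨M, rfl⟩ : ∃ M, N = M + 1 := ⟨N - 1, by omega⟩
    have hsplit : f (M + 1) x ≤ f 1 x + f M (T x) := by
      simpa [add_comm] using hf.le_add 1 M x
    have hrest := ih M (by omega) (T x)
    have hS_succ := birkhoffSum_succ' T (f 1) M x
    have hB_succ := birkhoffSum_succ' T (E.indicator (f 1)) M x
    by_cases hMK : M + 1 ≤ K
    · rw [show M - K = 0 by omega, birkhoffSum_zero] at hrest
      rw [show M + 1 - K = 0 by omega, birkhoffSum_zero]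
      push_cast
      linarith [hind x]
    · have hx : x ∈ E := fun n hn ↦ hstop n (by simp only [Finset.mem_Icc] at hn ⊢; omega)
      rw [Set.indicator_of_mem hx] at hB_succ
      rw [show M + 1 - K = M - K + 1 by omega, birkhoffSum_succ' T (f 1) (M - K) x]
      push_cast
      linarith

lemma linearGrowthInf_nonneg (hf : IsNonnegSubadditiveCocycle T f) (x : X) :
    0 ≤ linearGrowthInf fun n ↦ ((f n x : ℝ) : EReal) := by
  rw [← linearGrowthInf_zero]
  exact linearGrowthInf_monotone fun n ↦ EReal.coe_nonneg.2 (hf.nonneg n x)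

lemma linearGrowthInf_le_comp (hf : IsNonnegSubadditiveCocycle T f) (x : X) :
    (linearGrowthInf fun n ↦ ((f n x : ℝ) : EReal))
      ≤ linearGrowthInf fun n ↦ ((f n (T x) : ℝ) : EReal) := by
  refine (linearGrowthInf_le_comp_succ fun n ↦ EReal.coe_nonneg.2 (hf.nonneg n x)).trans <|
    linearGrowthInf_le_of_eventually_le (EReal.coe_ne_top (f 1 x)) <|
      Eventually.of_forall fun n ↦ ?_
  have := hf.le_add 1 n x
  rw [add_comm 1 n, Function.iterate_one, add_comm (f 1 x)] at this
  exact_mod_cast this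

lemma apply_mul_add_le (hf : IsNonnegSubadditiveCocycle T f) (m q s : ℕ) (z : X) :
    f (q * m + s) z ≤ ∑ k ∈ Finset.range q, f m (T^[k * m] z) + f s (T^[q * m] z) := by
  induction q generalizing z with
  | zero => simp
  | succ q ih =>
    have hiter (k : ℕ) : T^[k * m] (T^[m] z) = T^[(k + 1) * m] z := by
      rw [← Function.iterate_add_apply, add_one_mul]
    calc f ((q + 1) * m + s) z = f (m + (q * m + s)) z := by ring_nf
      _ ≤ f m z + f (q * m + s) (T^[m] z) := hf.le_add m _ z
      _ ≤ f m z + (∑ k ∈ Finset.range q, f m (T^[(k + 1) * m] z)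
            + f s (T^[(q + 1) * m] z)) := by
          simpa only [hiter] using add_le_add (le_refl (f m z)) (ih (T^[m] z))
      _ = _ := by
          rw [Finset.sum_range_succ']
          simp only [zero_mul, Function.iterate_zero, id_eq]
          ring

lemma le_sum_filter_mod_add (hf : IsNonnegSubadditiveCocycle T f) {m n r : ℕ} (hr : r < m)
    (hmn : m ≤ n) (x : X) :
    f n x ≤ ∑ j ∈ (Finset.range n).filter (· % m = r), f m (T^[j] x)
      + birkhoffSum T (f 1) m x + (birkhoffSum T (f 1) n x - birkhoffSum T (f 1) (n - m) x) := by
  obtain ⟨q, s, hs, hqs⟩ : ∃ q s, s < m ∧ q * m + s = n - r :=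
    ⟨(n - r) / m, (n - r) % m, Nat.mod_lt _ (by omega), Nat.div_add_mod' _ _⟩
  have hS := monotone_birkhoffSum (T := T) (hf.nonneg 1) x
  have hhead : f r x ≤ birkhoffSum T (f 1) m x := (hf.le_birkhoffSum r x).trans (hS hr.le)
  have hblocks : ∑ k ∈ Finset.range q, f m (T^[k * m] (T^[r] x))
      ≤ ∑ j ∈ (Finset.range n).filter (· % m = r), f m (T^[j] x) := by
    simp_rw [← Function.iterate_add_apply]
    rw [← Finset.sum_image (f := fun j ↦ f m (T^[j] x)) (g := fun k ↦ k * m + r)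
      fun a _ b _ hab ↦ by simpa [Nat.mul_left_inj (show m ≠ 0 by omega)] using hab]
    refine Finset.sum_le_sum_of_subset_of_nonneg (fun j hj ↦ ?_) fun _ _ _ ↦ hf.nonneg m _
    obtain ⟨k, hk, rfl⟩ := Finset.mem_image.1 hj
    have hkq : (k + 1) * m ≤ q * m := Nat.mul_le_mul_right m (Finset.mem_range.1 hk)
    rw [add_one_mul] at hkq
    simp only [Finset.mem_filter, Finset.mem_range, Nat.mul_add_mod', Nat.mod_eq_of_lt hr]
    exact ⟨by omega, trivial⟩
  have htail : f s (T^[q * m] (T^[r] x))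
      ≤ birkhoffSum T (f 1) n x - birkhoffSum T (f 1) (n - m) x := by
    have hsplit := birkhoffSum_add T (f 1) (q * m + r) s x
    rw [show q * m + r + s = n by omega, Function.iterate_add_apply] at hsplit
    linarith [hf.le_birkhoffSum s (T^[q * m] (T^[r] x)), hS (show n - m ≤ q * m + r by omega)]
  calc f n x ≤ f r x + f (n - r) (T^[r] x) := by
        simpa [Nat.add_sub_cancel' (hr.le.trans hmn)] using hf.le_add r (n - r) x
    _ ≤ f r x + (∑ k ∈ Finset.range q, f m (T^[k * m] (T^[r] x))
          + f s (T^[q * m] (T^[r] x))) := by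
        rw [← hqs]
        exact add_le_add le_rfl (hf.apply_mul_add_le m q s _)
    _ ≤ _ := by linarith

lemma mul_le_birkhoffSum_add (hf : IsNonnegSubadditiveCocycle T f) {m n : ℕ} (hm : 0 < m)
    (hmn : m ≤ n) (x : X) :
    m * f n x ≤ birkhoffSum T (f m) n x + m * birkhoffSum T (f 1) m x
      + m * (birkhoffSum T (f 1) n x - birkhoffSum T (f 1) (n - m) x) := by
  have hfib : ∑ r ∈ Finset.range m, ∑ j ∈ (Finset.range n).filter (· % m = r), f m (T^[j] x)
      = birkhoffSum T (f m) n x :=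
    Finset.sum_fiberwise_of_maps_to (fun j _ ↦ Finset.mem_range.2 (Nat.mod_lt _ hm)) _
  calc (m : ℝ) * f n x = ∑ _r ∈ Finset.range m, f n x := by simp
    _ ≤ ∑ r ∈ Finset.range m, (∑ j ∈ (Finset.range n).filter (· % m = r), f m (T^[j] x)
          + birkhoffSum T (f 1) m x
          + (birkhoffSum T (f 1) n x - birkhoffSum T (f 1) (n - m) x)) :=
        Finset.sum_le_sum fun r hr ↦ hf.le_sum_filter_mod_add (Finset.mem_range.1 hr) hmn x
    _ = _ := by simp [Finset.sum_add_distrib, hfib, mul_sub]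

end Pointwise

variable {X : Type*} [MeasurableSpace X] {μ : Measure X} {T : X → X} {f : ℕ → X → ℝ}

lemma integrable (hf : IsNonnegSubadditiveCocycle T f) (hT : MeasurePreserving T μ μ)
    (hfm : ∀ n, Measurable (f n)) (hint : Integrable (f 1) μ) (n : ℕ) : Integrable (f n) μ :=
  (hT.integrable_birkhoffSum hint n).mono' (hfm n).aestronglyMeasurable <|
    Eventually.of_forall fun x ↦ by
      rw [Real.norm_of_nonneg (hf.nonneg n x)]
      exact hf.le_birkhoffSum n x

variable [IsProbabilityMeasure μ]

lemma integral_le_add_setIntegral (hf : IsNonnegSubadditiveCocycle T f)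
    (hT : MeasurePreserving T μ μ) (hfm : ∀ n, Measurable (f n)) (hint : Integrable (f 1) μ)
    {β : ℝ} (hβ : 0 ≤ β) (K N : ℕ) :
    ∫ x, f N x ∂μ ≤ β * N + N * ∫ x in exceedanceSet f β K, f 1 x ∂μ + K * ∫ x, f 1 x ∂μ := by
  set E := exceedanceSet f β K
  have hE : MeasurableSet E := measurableSet_exceedanceSet hfm β K
  have hB := hT.integrable_birkhoffSum (hint.indicator hE) N
  have hS (n : ℕ) := hT.integrable_birkhoffSum hint n
  have hlin : Integrable (fun x ↦ β * N + birkhoffSum T (E.indicator (f 1)) N x) μ :=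
    (integrable_const _).add hB
  have hdiff : Integrable (fun x ↦ birkhoffSum T (f 1) N x - birkhoffSum T (f 1) (N - K) x) μ :=
    (hS N).sub (hS (N - K))
  calc ∫ x, f N x ∂μ
      ≤ ∫ x, (β * N + birkhoffSum T (E.indicator (f 1)) N x
          + (birkhoffSum T (f 1) N x - birkhoffSum T (f 1) (N - K) x)) ∂μ :=
        integral_mono (hf.integrable hT hfm hint N) (hlin.add hdiff)
          fun x ↦ hf.le_add_birkhoffSum_indicator_add_sub hβ K N x
    _ = β * N + N * ∫ x in E, f 1 x ∂μ + ((N : ℝ) - (N - K : ℕ)) * ∫ x, f 1 x ∂μ := by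
        rw [integral_add hlin hdiff, integral_add (integrable_const _) hB,
          integral_sub (hS N) (hS (N - K)), integral_const, hT.integral_birkhoffSum
          (hint.indicator hE), integral_indicator hE, hT.integral_birkhoffSum hint,
          hT.integral_birkhoffSum hint]
        simp only [probReal_univ, smul_eq_mul, one_mul]
        ring
    _ ≤ β * N + N * ∫ x in E, f 1 x ∂μ + K * ∫ x, f 1 x ∂μ := by
        gcongr
        · exact integral_nonneg (hf.nonneg 1)
        · rw [sub_le_iff_le_add]
          exact_mod_cast (by omega : N ≤ K + (N - K))

lemma le_add_setIntegral (hf : IsNonnegSubadditiveCocycle T f)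
    (hT : MeasurePreserving T μ μ) (hfm : ∀ n, Measurable (f n)) (hint : Integrable (f 1) μ)
    {β : ℝ} (hβ : 0 ≤ β) {A : ℝ} (hA : Tendsto (fun n : ℕ ↦ (∫ x, f n x ∂μ) / n) atTop (𝓝 A))
    (K : ℕ) : A ≤ β + ∫ x in exceedanceSet f β K, f 1 x ∂μ := by
  set I := ∫ x in exceedanceSet f β K, f 1 x ∂μ
  have hbound : Tendsto (fun N : ℕ ↦ β + I + K * (∫ x, f 1 x ∂μ) / N) atTop (𝓝 (β + I)) := by
    simpa using (tendsto_const_nhds (x := β + I)).add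
      (tendsto_const_div_atTop_nhds_zero_nat (K * ∫ x, f 1 x ∂μ))
  refine le_of_tendsto_of_tendsto hA hbound ?_
  filter_upwards [eventually_gt_atTop 0] with N hN
  have hN' : (0 : ℝ) < N := by exact_mod_cast hN
  rw [div_le_iff₀ hN', add_mul, add_mul, div_mul_cancel₀ _ hN'.ne']
  linarith [hf.integral_le_add_setIntegral hT hfm hint hβ K N]

lemma ae_le_linearGrowthInf (hf : IsNonnegSubadditiveCocycle T f) (hT : Ergodic T μ)
    (hfm : ∀ n, Measurable (f n)) (hint : Integrable (f 1) μ) {A : ℝ}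
    (hA : Tendsto (fun n : ℕ ↦ (∫ x, f n x ∂μ) / n) atTop (𝓝 A)) :
    ∀ᵐ x ∂μ, (A : EReal) ≤ linearGrowthInf fun n ↦ ((f n x : ℝ) : EReal) := by
  obtain ⟨c, hc⟩ :=
    hT.exists_ae_eq_const_of_le_comp (measurable_linearGrowthInf_coe hfm) hf.linearGrowthInf_le_comp
  suffices hAc : (A : EReal) ≤ c by
    filter_upwards [hc] with x hx
    exact hAc.trans_eq hx.symm
  by_contra! hlt
  obtain ⟨β, hcβ, hβA⟩ := EReal.lt_iff_exists_real_btwn.1 hlt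
  obtain ⟨x₀, hx₀⟩ := hc.exists
  have hβ : 0 ≤ β := EReal.coe_nonneg.1 ((hf.linearGrowthInf_nonneg x₀).trans (hx₀.trans_le hcβ.le))
  rw [EReal.coe_lt_coe_iff] at hβA
  have hnull : μ (⋂ K, exceedanceSet f β K) = 0 := by
    refine measure_eq_zero_iff_ae_notMem.2 ?_
    filter_upwards [hc] with x hx hmem
    obtain ⟨n, hn, hn1⟩ := ((frequently_le_mul (hx.trans_lt hcβ)).and_eventually
      (eventually_ge_atTop 1)).exists
    have hfn : f n x ≤ β * n := by exact_mod_cast hn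
    exact (mem_iInter.1 hmem n n (Finset.mem_Icc.2 ⟨hn1, le_rfl⟩)).not_ge hfn
  have hlim := tendsto_setIntegral_of_antitone (measurableSet_exceedanceSet hfm β)
    (antitone_exceedanceSet f β) ⟨0, hint.integrableOn⟩
  rw [setIntegral_measure_zero _ hnull] at hlim
  obtain ⟨K, hK⟩ := (hlim.eventually (gt_mem_nhds (sub_pos.2 hβA))).exists
  linarith [hf.le_add_setIntegral hT.toMeasurePreserving hfm hint hβ hA K]

end IsNonnegSubadditiveCocycle

theorem Ergodic.ae_tendsto_birkhoffSum_div {X : Type*} [MeasurableSpace X] {μ : Measure X}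
    [IsProbabilityMeasure μ] {T : X → X} {g : X → ℝ} (hT : Ergodic T μ) (hgm : Measurable g)
    (hg0 : ∀ x, 0 ≤ g x) (hg : Integrable g μ) :
    ∀ᵐ x ∂μ, Tendsto (fun n ↦ birkhoffSum T g n x / n) atTop (𝓝 (∫ x, g x ∂μ)) := by
  have hA : Tendsto (fun n : ℕ ↦ (∫ x, birkhoffSum T g n x ∂μ) / n) atTop (𝓝 (∫ x, g x ∂μ)) :=
    tendsto_const_nhds.congr' <| (eventually_ne_atTop 0).mono fun n hn ↦ by
      dsimp only
      rw [hT.toMeasurePreserving.integral_birkhoffSum hg,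
        mul_div_cancel_left₀ _ (Nat.cast_ne_zero.2 hn)]
  filter_upwards [(isNonnegSubadditiveCocycle_birkhoffSum hg0).ae_le_linearGrowthInf hT
      (hgm.birkhoffSum hT.measurable) (by simpa using hg) hA,
    hT.ae_linearGrowthSup_birkhoffSum_le hgm hg0 hg] with x hinf hsup
  exact tendsto_div_of_le_linearGrowthInf_of_linearGrowthSup_le hinf hsup

namespace IsNonnegSubadditiveCocycle

variable {X : Type*} [MeasurableSpace X] {μ : Measure X} [IsProbabilityMeasure μ] {T : X → X}
  {f : ℕ → X → ℝ}

lemma ae_linearGrowthSup_le_integral_div (hf : IsNonnegSubadditiveCocycle T f)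
    (hT : Ergodic T μ) (hfm : ∀ n, Measurable (f n)) (hint : Integrable (f 1) μ) {m : ℕ}
    (hm : 0 < m) :
    ∀ᵐ x ∂μ, (linearGrowthSup fun n ↦ ((f n x : ℝ) : EReal)) ≤ ((∫ x, f m x ∂μ) / m : ℝ) := by
  filter_upwards [hT.ae_tendsto_birkhoffSum_div (hfm m) (hf.nonneg m)
      (hf.integrable hT.toMeasurePreserving hfm hint m),
    hT.ae_tendsto_birkhoffSum_div (hfm 1) (hf.nonneg 1) hint] with x hSm hS1
  have hm0 : (0 : ℝ) < m := by exact_mod_cast hm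
  refine linearGrowthSup_coe_le_of_tendsto (v := fun n ↦ birkhoffSum T (f m) n x / n / m
    + birkhoffSum T (f 1) m x / n
    + (birkhoffSum T (f 1) n x - birkhoffSum T (f 1) (n - m) x) / n) ?_ ?_
  · filter_upwards [eventually_ge_atTop m] with n hn
    have hn0 : (0 : ℝ) < n := by exact_mod_cast hm.trans_le hn
    rw [div_le_iff₀ hn0, ← mul_le_mul_iff_of_pos_left hm0]
    refine (hf.mul_le_birkhoffSum_add hm hn x).trans_eq ?_
    field_simp
  · simpa using ((hSm.div_const m).add (tendsto_const_div_atTop_nhds_zero_nat _)).add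
      (tendsto_sub_sub_div_of_tendsto_div hS1 m)

lemma ae_linearGrowthSup_le (hf : IsNonnegSubadditiveCocycle T f) (hT : Ergodic T μ)
    (hfm : ∀ n, Measurable (f n)) (hint : Integrable (f 1) μ) {A : ℝ}
    (hA : Tendsto (fun n : ℕ ↦ (∫ x, f n x ∂μ) / n) atTop (𝓝 A)) :
    ∀ᵐ x ∂μ, (linearGrowthSup fun n ↦ ((f n x : ℝ) : EReal)) ≤ A := by
  filter_upwards [ae_all_iff.2 fun m : ℕ ↦
    hf.ae_linearGrowthSup_le_integral_div hT hfm hint m.succ_pos] with x hx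
  exact ge_of_tendsto (EReal.tendsto_coe.2 (hA.comp (tendsto_add_atTop_nat 1)))
    (Eventually.of_forall hx)

theorem ae_tendsto_div (hf : IsNonnegSubadditiveCocycle T f) (hT : Ergodic T μ)
    (hfm : ∀ n, Measurable (f n)) (hint : Integrable (f 1) μ) {A : ℝ}
    (hA : Tendsto (fun n : ℕ ↦ (∫ x, f n x ∂μ) / n) atTop (𝓝 A)) :
    ∀ᵐ x ∂μ, Tendsto (fun n ↦ f n x / n) atTop (𝓝 A) := by
  filter_upwards [hf.ae_le_linearGrowthInf hT hfm hint hA,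
    hf.ae_linearGrowthSup_le hT hfm hint hA] with x hinf hsup
  exact tendsto_div_of_le_linearGrowthInf_of_linearGrowthSup_le hinf hsup

end IsNonnegSubadditiveCocycle
section NonexpansiveCocycle

variable {X Y : Type*} {T : X → X} {D : Set Y} {w : X → Y → Y} {a : ℕ → X → Y → Y}

lemma cocycle_add_eq_comp (ha0 : ∀ x, a 0 x = id) (harec : ∀ n x, a (n + 1) x = w x ∘ a n (T x))
    (m n : ℕ) (x : X) : a (m + n) x = a m x ∘ a n (T^[m] x) := by
  induction m generalizing x with
  | zero => simp [ha0]
  | succ m ih =>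
    rw [Nat.add_right_comm, harec, ih, harec, Function.iterate_succ_apply]
    rfl

variable [PseudoMetricSpace Y]

lemma cocycle_mapsTo_lipschitzOnWith (hw : ∀ x, MapsTo (w x) D D ∧ LipschitzOnWith 1 (w x) D)
    (ha0 : ∀ x, a 0 x = id) (harec : ∀ n x, a (n + 1) x = w x ∘ a n (T x)) (n : ℕ) (x : X) :
    MapsTo (a n x) D D ∧ LipschitzOnWith 1 (a n x) D := by
  induction n generalizing x with
  | zero =>
    rw [ha0]
    exact ⟨mapsTo_id D, LipschitzWith.id.lipschitzOnWith⟩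
  | succ n ih =>
    rw [harec]
    exact ⟨(hw x).1.comp (ih (T x)).1, by simpa using (hw x).2.comp (ih (T x)).2 (ih (T x)).1⟩

lemma isNonnegSubadditiveCocycle_dist (hw : ∀ x, MapsTo (w x) D D ∧ LipschitzOnWith 1 (w x) D)
    (ha0 : ∀ x, a 0 x = id) (harec : ∀ n x, a (n + 1) x = w x ∘ a n (T x)) {y : Y} (hy : y ∈ D) :
    IsNonnegSubadditiveCocycle T fun n x ↦ dist y (a n x y) where
  zero x := by simp [ha0]
  nonneg _ _ := dist_nonneg
  le_add m n x := by
    have ha := cocycle_mapsTo_lipschitzOnWith hw ha0 harec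
    rw [cocycle_add_eq_comp ha0 harec, Function.comp_apply]
    calc dist y (a m x (a n (T^[m] x) y))
        ≤ dist y (a m x y) + dist (a m x y) (a m x (a n (T^[m] x) y)) := dist_triangle _ _ _
      _ ≤ dist y (a m x y) + dist y (a n (T^[m] x) y) := by
          gcongr
          simpa using (ha m x).2.dist_le_mul y hy _ ((ha n (T^[m] x)).1 hy)

end NonexpansiveCocycle

/-- In the cocycle setting with `T` ergodic, for almost every `x`,
`lim_n d(y, aₙ(x)y)/n = A` (a consequence of Kingman's subadditive ergodic theorem). -/
theorem ae_pointwise_limit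
    {Y : Type*} [MetricSpace Y]
    {X : Type*} [MeasurableSpace X] (μ : Measure X) [IsProbabilityMeasure μ]
    (T : X → X) (hT : Ergodic T μ)
    (D : Set Y) (w : X → Y → Y)
    (hw : ∀ x, Set.MapsTo (w x) D D ∧ LipschitzOnWith 1 (w x) D)
    (y : Y) (hy : y ∈ D)
    (a : ℕ → X → Y → Y) (ha0 : ∀ x, a 0 x = id)
    (harec : ∀ n x, a (n + 1) x = w x ∘ a n (T x))
    (hmeas : ∀ n, Measurable fun x => dist y (a n x y))
    (hint : Integrable (fun x => dist y (a 1 x y)) μ)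
    (A : ℝ)
    (hA : Tendsto (fun n : ℕ => (∫ x, dist y (a n x y) ∂μ) / n) atTop (nhds A)) :
    ∀ᵐ x ∂μ, Tendsto (fun n : ℕ => dist y (a n x y) / n) atTop (nhds A) :=
  (isNonnegSubadditiveCocycle_dist hw ha0 harec hy).ae_tendsto_div hT hmeas hint hA
end

section
/- Every weakly uniformly convex geodesic space Y satisfying condition (1) has property (C) with Ψ(y,r,ε) = δ_Y(y,r,ε). Explicitly: (C1) for all y ∈ Y, r > 0, ε ∈ (0,2], all x, z ∈ Y with d(x,y) = r and d(y,z) ≥ r, and every point w on a geodesic segment [y,z] with d(y,w) = r, if r + d(x,z) ≤ d(y,z) + δ_Y(y,r,ε)·r then d(w,x) ≤ εr; (C2) for every y ∈ Y and ε ∈ (0,2] there exists s > 0 with inf_{r ≥ s} δ_Y(y,r,ε) > 0. -/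
open Set Filter MeasureTheory

lemma midpoint_dists {Y : Type*} [MetricSpace Y] {x y m : Y} (h : IsMidpointOf x y m) :
    dist x m = dist x y / 2 ∧ dist y m = dist x y / 2 := by
  obtain ⟨γ, ⟨hγ, h0, h1⟩, hm⟩ := h
  have hd : (0:ℝ) ≤ dist x y := dist_nonneg
  have h2 : dist x y / 2 ∈ Set.Icc (0:ℝ) (dist x y) := ⟨by linarith, by linarith⟩
  have h0' : (0:ℝ) ∈ Set.Icc (0:ℝ) (dist x y) := ⟨le_refl _, hd⟩
  have hL : dist x y ∈ Set.Icc (0:ℝ) (dist x y) := ⟨hd, le_refl _⟩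
  constructor
  · have e := hγ 0 h0' _ h2
    rw [h0, hm] at e
    rw [e, abs_of_nonpos (by linarith)]
    ring
  · have e := hγ _ hL _ h2
    rw [h1, hm] at e
    rw [e, abs_of_nonneg (by linarith)]
    ring

lemma convMod_bddBelow (Y : Type*) [MetricSpace Y] (a : Y) {r : ℝ} (hr : 0 < r) (ε : ℝ) :
    BddBelow ({1} ∪ {u : ℝ | ∃ x y m : Y, dist a x ≤ r ∧ dist a y ≤ r ∧ ε * r ≤ dist x y ∧
      IsMidpointOf x y m ∧ u = 1 - dist a m / r}) := by
  refine ⟨-1, fun u hu => ?_⟩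
  rcases hu with hu | ⟨x, y, m, hx, hy, _, hm, rfl⟩
  · simp only [Set.mem_singleton_iff] at hu; rw [hu]; norm_num
  · have hxm := (midpoint_dists hm).1
    have hxy : dist x y ≤ 2 * r := by
      calc dist x y ≤ dist x a + dist a y := dist_triangle _ _ _
      _ ≤ r + r := by rw [dist_comm x a]; exact add_le_add hx hy
      _ = 2 * r := by ring
    have ham : dist a m ≤ 2 * r := by
      calc dist a m ≤ dist a x + dist x m := dist_triangle _ _ _
      _ = dist a x + dist x y / 2 := by rw [hxm]
      _ ≤ r + r := by linarith
      _ = 2 * r := by ring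
    have : dist a m / r ≤ 2 := by rw [div_le_iff₀ hr]; linarith
    linarith

lemma convMod_le {Y : Type*} [MetricSpace Y] {a x y m : Y} {r ε : ℝ} (hr : 0 < r)
    (hx : dist a x ≤ r) (hy : dist a y ≤ r) (hxy : ε * r ≤ dist x y)
    (hm : IsMidpointOf x y m) : convMod Y a r ε ≤ 1 - dist a m / r :=
  csInf_le (convMod_bddBelow Y a hr ε) (Or.inr ⟨x, y, m, hx, hy, hxy, hm, rfl⟩)

/-- **Lemma 2.1**: any weakly uniformly convex geodesic space satisfying condition (1)
has property (C) with `Ψ(y, r, ε) = δ_Y(y, r, ε)`. -/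
theorem property_C_of_weaklyUniformlyConvex
    {Y : Type*} [MetricSpace Y] (hgeo : GeodesicSpace Y)
    (hwuc : WeaklyUniformlyConvex Y) (hcond : CondOne Y) :
    -- (C1)
    (∀ (y : Y) (r ε : ℝ), 0 < r → ε ∈ Set.Ioc (0:ℝ) 2 →
      ∀ x z : Y, dist x y = r → r ≤ dist y z →
        ∀ w : Y, OnGeodesicSegment y z w → dist y w = r →
          r + dist x z ≤ dist y z + convMod Y y r ε * r → dist w x ≤ ε * r) ∧
    -- (C2)
    (∀ (y : Y) (ε : ℝ), ε ∈ Set.Ioc (0:ℝ) 2 →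
      ∃ s > (0:ℝ), 0 < sInf {u : ℝ | ∃ r ≥ s, u = convMod Y y r ε}) := by
  constructor
  · intro y r ε hr hε x z hxy hrz w hw hyw hmain
    by_contra hcon
    push_neg at hcon
    -- notation
    set δ := convMod Y y r ε with hδdef
    have hδpos : 0 < δ := hwuc y r ε hr hε
    -- distance from w to z
    obtain ⟨γ, ⟨hγ, hγ0, hγ1⟩, t, ht, hγt⟩ := hw
    have hD : (0:ℝ) ≤ dist y z := dist_nonneg
    have ht0 : (0:ℝ) ∈ Set.Icc (0:ℝ) (dist y z) := ⟨le_refl _, hD⟩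
    have htD : dist y z ∈ Set.Icc (0:ℝ) (dist y z) := ⟨hD, le_refl _⟩
    have htr : t = r := by
      have := hγ 0 ht0 t ht
      rw [hγ0, hγt] at this
      rw [hyw] at this
      rw [abs_of_nonpos (by linarith [ht.1])] at this
      linarith
    have hwz : dist w z = dist y z - r := by
      have := hγ t ht (dist y z) htD
      rw [hγt, hγ1] at this
      rw [this, htr, abs_of_nonpos (by linarith)]
      ring
    -- midpoint of x and w
    obtain ⟨γ', hγ'⟩ := hgeo x w
    set m := γ' (dist x w / 2) with hmdef
    have hm : IsMidpointOf x w m := ⟨γ', hγ', rfl⟩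
    obtain ⟨hxm, hwm⟩ := midpoint_dists hm
    -- distance x w positive
    have hcon' : ε * r < dist x w := by rwa [dist_comm w x] at hcon
    have hxw0 : 0 < dist x w := lt_of_le_of_lt (mul_nonneg hε.1.le hr.le) hcon'
    -- the second radius
    set R := max (dist x z) (dist w z) with hRdef
    have hxwR : dist x w ≤ 2 * R := by
      calc dist x w ≤ dist x z + dist z w := dist_triangle _ _ _
      _ ≤ R + R := add_le_add (le_max_left _ _) (by rw [dist_comm z w]; exact le_max_right _ _)
      _ = 2 * R := by ring
    have hR0 : 0 < R := by linarith
    set ε' := dist x w / R with hε'def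
    have hε' : ε' ∈ Set.Ioc (0:ℝ) 2 := by
      constructor
      · positivity
      · rw [div_le_iff₀ hR0]; linarith
    set δ' := convMod Y z R ε' with hδ'def
    have hδ'pos : 0 < δ' := hwuc z R ε' hR0 hε'
    -- first application of uniform convexity (at y, radius r)
    have h1 : δ ≤ 1 - dist y m / r := by
      exact convMod_le hr (by rw [dist_comm]; exact le_of_eq hxy) (le_of_eq hyw) hcon'.le hm
    -- second application (at z, radius R)
    have h2 : δ' ≤ 1 - dist z m / R := by
      refine convMod_le hR0 (by rw [dist_comm]; exact le_max_left _ _)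
        (by rw [dist_comm]; exact le_max_right _ _) (le_of_eq ?_) hm
      show dist x w / R * R = dist x w
      exact div_mul_cancel₀ _ hR0.ne'
    have hym : dist y m ≤ (1 - δ) * r := by
      have : dist y m / r ≤ 1 - δ := by linarith
      calc dist y m = dist y m / r * r := by field_simp
      _ ≤ (1 - δ) * r := mul_le_mul_of_nonneg_right this (le_of_lt hr)
    have hzm : dist z m ≤ (1 - δ') * R := by
      have : dist z m / R ≤ 1 - δ' := by linarith
      calc dist z m = dist z m / R * R := by field_simp
      _ ≤ (1 - δ') * R := mul_le_mul_of_nonneg_right this (le_of_lt hR0)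
    -- R is small
    have hRsmall : R ≤ dist y z - r + δ * r := by
      refine max_le (by linarith) (by nlinarith)
    -- triangle, contradiction
    have htri : dist y z ≤ dist y m + dist z m := by
      rw [dist_comm z m]; exact dist_triangle _ _ _
    have e1 : (1 - δ) * r = r - δ * r := by ring
    have e2 : (1 - δ') * R = R - δ' * R := by ring
    have hδ'R : 0 < δ' * R := mul_pos hδ'pos hR0
    linarith
  · intro y ε hε
    exact hcond y ε hε.1
end

section
/- Let Y be a geodesic space that is p-uniformly convex with parameter k (1 < p < ∞, 0 < k ≤ 8/2^p). Then Y is uniformly convex in the sense of Karlsson–Margulis with g(t) = (1 − k·(2t)^p/8)^{1/p}: g : [0,1] → [0,1] is strictly decreasing and continuous with g(0) = 1, and for all a, x, y ∈ Y and every midpoint m(x,y), d(a, m(x,y))/M ≤ g(d(x,y)/(2M)), where M = max{d(a,x), d(a,y)}. -/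
open Set Filter MeasureTheory

/-- `Y` is `p`-uniformly convex with parameter `k` (Naor–Silberman): for all `a, x, y`,
every geodesic from `x` to `y` and every `t ∈ [0,1]`,
`d(a,(1-t)x + ty)^p ≤ (1-t) d(a,x)^p + t d(a,y)^p - (k/2) t (1-t) d(x,y)^p`. -/
def PUniformlyConvex (Y : Type*) [MetricSpace Y] (p k : ℝ) : Prop :=
  ∀ (a x y : Y) (γ : ℝ → Y), IsGeodesicFromTo x y γ → ∀ t ∈ Set.Icc (0:ℝ) 1,
    dist a (γ (t * dist x y)) ^ p ≤
      (1 - t) * dist a x ^ p + t * dist a y ^ p - k / 2 * (t * (1 - t) * dist x y ^ p)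

/-- A `p`-uniformly convex geodesic space (with `0 < k ≤ 8/2^p`) is uniformly convex in
the sense of Karlsson–Margulis with `g(t) = (1 - k (2t)^p / 8)^{1/p}`. -/
theorem pUniformlyConvex_implies_karlssonMargulis
    {Y : Type*} [MetricSpace Y] (hgeo : GeodesicSpace Y)
    (p k : ℝ) (hp : 1 < p) (hk : 0 < k) (hk' : k ≤ 8 / 2 ^ p)
    (hpc : PUniformlyConvex Y p k)
    (g : ℝ → ℝ) (hgdef : ∀ t : ℝ, g t = (1 - k * (2 * t) ^ p / 8) ^ (1 / p)) :
    StrictAntiOn g (Set.Icc 0 1) ∧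
    ContinuousOn g (Set.Icc 0 1) ∧
    Set.MapsTo g (Set.Icc 0 1) (Set.Icc 0 1) ∧
    g 0 = 1 ∧
    ∀ a x y m : Y, IsMidpointOf x y m →
      dist a m / max (dist a x) (dist a y) ≤
        g (dist x y / (2 * max (dist a x) (dist a y))) := by
  have hp0 : (0:ℝ) < p := lt_trans one_pos hp
  have hip : (0:ℝ) < 1 / p := by positivity
  -- inner bound
  have hinner : ∀ t ∈ Set.Icc (0:ℝ) 1, 0 ≤ 1 - k * (2 * t) ^ p / 8 := by
    intro t ht
    have h1 : (2 * t) ^ p ≤ (2:ℝ) ^ p :=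
      Real.rpow_le_rpow (by nlinarith [ht.1]) (by nlinarith [ht.2]) hp0.le
    have h2p : (0:ℝ) < (2:ℝ) ^ p := Real.rpow_pos_of_pos two_pos p
    have : k * (2 * t) ^ p ≤ (8 / 2 ^ p) * 2 ^ p := by
      apply mul_le_mul hk' h1 (Real.rpow_nonneg (by nlinarith [ht.1]) p) (by positivity)
    have h8 : (8 / (2:ℝ) ^ p) * (2:ℝ) ^ p = 8 := by field_simp
    nlinarith [this, h8, hk]
  have hinner1 : ∀ t : ℝ, 0 ≤ t → 1 - k * (2 * t) ^ p / 8 ≤ 1 := by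
    intro t ht
    have : 0 ≤ (2 * t) ^ p := Real.rpow_nonneg (by linarith) p
    nlinarith
  have hg0 : g 0 = 1 := by
    rw [hgdef]
    norm_num
    rw [Real.zero_rpow (ne_of_gt hp0)]
    norm_num
  refine ⟨?_, ?_, ?_, hg0, ?_⟩
  · -- StrictAntiOn
    intro s hs t ht hst
    rw [hgdef, hgdef]
    have h1 : (2 * s) ^ p < (2 * t) ^ p :=
      Real.rpow_lt_rpow (by nlinarith [hs.1]) (by linarith) hp0
    have h2 : 1 - k * (2 * t) ^ p / 8 < 1 - k * (2 * s) ^ p / 8 := by nlinarith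
    exact Real.rpow_lt_rpow (hinner t ht) h2 hip
  · -- ContinuousOn
    have hc : Continuous fun t : ℝ => (1 - k * (2 * t) ^ p / 8) ^ (1 / p) := by
      apply Continuous.rpow_const
      · apply Continuous.sub continuous_const
        apply Continuous.div_const
        apply Continuous.mul continuous_const
        exact (continuous_const.mul continuous_id).rpow_const (fun x => Or.inr hp0.le)
      · exact fun _ => Or.inr hip.le
    exact (hc.continuousOn).congr (fun t _ => hgdef t)
  · -- MapsTo
    intro t ht
    rw [hgdef]
    constructor
    · exact Real.rpow_nonneg (hinner t ht) _
    · exact Real.rpow_le_one (hinner t ht) (hinner1 t ht.1) hip.le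
  · intro a x y m hm
    obtain ⟨γ, hγ, hγm⟩ := hm
    set M := max (dist a x) (dist a y) with hM
    have hM0 : 0 ≤ M := le_trans dist_nonneg (le_max_left _ _)
    rcases eq_or_lt_of_le hM0 with hMz | hMpos
    · -- M = 0
      have hax : dist a x = 0 := le_antisymm (hMz ▸ le_max_left _ _) dist_nonneg
      have hay : dist a y = 0 := le_antisymm (hMz ▸ le_max_right _ _) dist_nonneg
      have hx : x = a := by rw [dist_eq_zero] at hax; exact hax.symm
      have hy : y = a := by rw [dist_eq_zero] at hay; exact hay.symm
      have hxy : dist x y = 0 := by rw [hx, hy, dist_self]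
      have hmx : m = x := by
        rw [← hγm, hxy]; norm_num; exact hγ.2.1
      have ham : dist a m = 0 := by rw [hmx, hx, dist_self]
      rw [ham, ← hMz]
      simp only [div_zero]
      rw [mul_zero, div_zero, hg0]
      norm_num
    · -- M > 0
      have key := hpc a x y γ hγ (1/2) ⟨by norm_num, by norm_num⟩
      have hhalf : (1/2 : ℝ) * dist x y = dist x y / 2 := by ring
      rw [hhalf, hγm] at key
      have haxM : dist a x ^ p ≤ M ^ p :=
        Real.rpow_le_rpow dist_nonneg (le_max_left _ _) hp0.le
      have hayM : dist a y ^ p ≤ M ^ p :=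
        Real.rpow_le_rpow dist_nonneg (le_max_right _ _) hp0.le
      have hkey : dist a m ^ p ≤ M ^ p - k * dist x y ^ p / 8 := by nlinarith
      have hMp : (0:ℝ) < M ^ p := Real.rpow_pos_of_pos hMpos p
      have harg : 2 * (dist x y / (2 * M)) = dist x y / M := by
        field_simp
      rw [hgdef, harg]
      have hdiv : (dist x y / M) ^ p = dist x y ^ p / M ^ p :=
        Real.div_rpow dist_nonneg hM0 p
      have hineq : (dist a m / M) ^ p ≤ 1 - k * (dist x y / M) ^ p / 8 := by
        rw [Real.div_rpow dist_nonneg hM0, hdiv]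
        rw [div_le_iff₀ hMp] at *
        have : (1 - k * (dist x y ^ p / M ^ p) / 8) * M ^ p
            = M ^ p - k * dist x y ^ p / 8 := by field_simp
        rw [this]
        exact hkey
      have hdm : 0 ≤ dist a m / M := div_nonneg dist_nonneg hM0
      calc dist a m / M = ((dist a m / M) ^ p) ^ (1/p) := by
            rw [one_div, Real.rpow_rpow_inv hdm (ne_of_gt hp0)]
        _ ≤ (1 - k * (dist x y / M) ^ p / 8) ^ (1/p) :=
            Real.rpow_le_rpow (Real.rpow_nonneg hdm p) hineq hip.le
end

section
/- Let Y be a geodesic space that is p-uniformly convex with parameter k (1 < p < ∞, 0 < k ≤ 8/2^p). Then Y is uniformly p-convex in the sense of Kell with ρ_p(ε) = 1 − (1 − k·ε^p/8)^{1/p}: for every ε > 0 and all a, x, y ∈ Y with d(x,y) > ε·M^p(d(a,x), d(a,y)), every midpoint m(x,y) satisfies d(a, m(x,y)) ≤ (1 − ρ_p(ε))·M^p(d(a,x), d(a,y)), where M^p(α,β) = (α^p/2 + β^p/2)^{1/p}. -/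
open Set Filter MeasureTheory

/-- A `p`-uniformly convex geodesic space (with `0 < k ≤ 8/2^p`) is uniformly
`p`-convex in the sense of Kell with `ρ_p(ε) = 1 - (1 - kε^p/8)^{1/p}`, where
`M^p(α,β) = (α^p/2 + β^p/2)^{1/p}`. -/
theorem pUniformlyConvex_implies_kell
    {Y : Type*} [MetricSpace Y] (hgeo : GeodesicSpace Y)
    (p k : ℝ) (hp : 1 < p) (hk : 0 < k) (hk' : k ≤ 8 / 2 ^ p)
    (hpc : PUniformlyConvex Y p k)
    (ρ : ℝ → ℝ) (hρdef : ∀ ε : ℝ, ρ ε = 1 - (1 - k * ε ^ p / 8) ^ (1 / p)) :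
    ∀ ε : ℝ, 0 < ε → ∀ a x y m : Y, IsMidpointOf x y m →
      ε * ((dist a x ^ p / 2 + dist a y ^ p / 2) ^ (1 / p)) < dist x y →
      dist a m ≤ (1 - ρ ε) * ((dist a x ^ p / 2 + dist a y ^ p / 2) ^ (1 / p)) := by
  intro ε hε a x y m hm hlt
  obtain ⟨γ, hγ, hγm⟩ := hm
  have hp0 : 0 < p := by linarith
  set A := dist a x with hA
  set B := dist a y with hB
  set D := dist x y with hDdef
  have hA0 : (0:ℝ) ≤ A := dist_nonneg
  have hB0 : (0:ℝ) ≤ B := dist_nonneg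
  set S := A ^ p / 2 + B ^ p / 2 with hS
  have hAp : (0:ℝ) ≤ A ^ p := Real.rpow_nonneg hA0 p
  have hBp : (0:ℝ) ≤ B ^ p := Real.rpow_nonneg hB0 p
  have hS0 : (0:ℝ) ≤ S := by rw [hS]; linarith
  have hM0 : (0:ℝ) ≤ S ^ (1/p) := Real.rpow_nonneg hS0 _
  have hDpos : 0 < D := lt_of_le_of_lt (by positivity) hlt
  -- S > 0
  have hSpos : 0 < S := by
    rcases lt_or_eq_of_le hS0 with h | h
    · exact h
    · exfalso
      have hApz : A ^ p = 0 := by rw [hS] at h; linarith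
      have hBpz : B ^ p = 0 := by rw [hS] at h; linarith
      have hAz : A = 0 := by
        rcases (Real.rpow_eq_zero_iff_of_nonneg hA0).mp hApz with ⟨h1, _⟩
        exact h1
      have hBz : B = 0 := by
        rcases (Real.rpow_eq_zero_iff_of_nonneg hB0).mp hBpz with ⟨h1, _⟩
        exact h1
      have hxa : x = a := by rw [← dist_eq_zero]; rw [dist_comm]; exact hAz
      have hya : y = a := by rw [← dist_eq_zero]; rw [dist_comm]; exact hBz
      have : D = 0 := by rw [hDdef, hxa, hya, dist_self]
      linarith
  -- key power inequality
  have h := hpc a x y γ hγ (1/2) ⟨by norm_num, by norm_num⟩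
  rw [show (1/2 : ℝ) * dist x y = dist x y / 2 by ring, hγm] at h
  have hεS : ε ^ p * S < D ^ p := by
    have := Real.rpow_lt_rpow (by positivity) hlt hp0
    rwa [Real.mul_rpow hε.le hM0, ← Real.rpow_mul hS0,
      one_div_mul_cancel (ne_of_gt hp0), Real.rpow_one] at this
  have key : dist a m ^ p ≤ (1 - k * ε ^ p / 8) * S := by
    have h8 : k / 8 * (ε ^ p * S) ≤ k / 8 * D ^ p :=
      mul_le_mul_of_nonneg_left hεS.le (by positivity)
    have : dist a m ^ p ≤ S - k / 8 * D ^ p := by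
      rw [hS]
      calc dist a m ^ p ≤ (1 - 1/2) * A ^ p + 1/2 * B ^ p
            - k / 2 * (1/2 * (1 - 1/2) * D ^ p) := h
        _ = A ^ p / 2 + B ^ p / 2 - k / 8 * D ^ p := by ring
    calc dist a m ^ p ≤ S - k / 8 * D ^ p := this
      _ ≤ S - k / 8 * (ε ^ p * S) := by linarith
      _ = (1 - k * ε ^ p / 8) * S := by ring
  have hdam : (0:ℝ) ≤ dist a m ^ p := Real.rpow_nonneg dist_nonneg p
  have hone : (0:ℝ) ≤ 1 - k * ε ^ p / 8 := by
    by_contra hcon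
    push_neg at hcon
    have := mul_neg_of_neg_of_pos hcon hSpos
    linarith
  -- take (1/p)-th power
  have hfin : (dist a m ^ p) ^ (1/p) ≤ ((1 - k * ε ^ p / 8) * S) ^ (1/p) :=
    Real.rpow_le_rpow hdam key (by positivity)
  rw [← Real.rpow_mul dist_nonneg, mul_one_div_cancel (ne_of_gt hp0), Real.rpow_one,
    Real.mul_rpow hone hS0] at hfin
  rw [hρdef]
  simpa using hfin
end

section
/- Let (X,d_X) and (Y,d_Y) be weakly uniformly convex geodesic spaces with monotone moduli of weak uniform convexity η_X and η_Y, respectively, and let θ ∈ X, τ ∈ Y. Then the gluing X ⊔_θ Y with the gluing metric is weakly uniformly convex with modulus η given by: η(a,r,ε) = min{η_X(a,r,ε), η_Y(τ,r,ε)·ε/2, ε/4, η_X(a,r,ε/4)} if a ∈ X, and η(a,r,ε) = min{η_Y(a,r,ε), η_X(θ,r,ε)·ε/2, ε/4, η_Y(a,r,ε/4)} if a ∈ Y. -/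
open Set Filter MeasureTheory

/-- The gluing distance on the disjoint union `X ⊕ Y`, identifying `θ ∈ X` with `τ ∈ Y`. -/
noncomputable def pointGlueDist {X Y : Type*} [MetricSpace X] [MetricSpace Y]
    (θ : X) (τ : Y) : X ⊕ Y → X ⊕ Y → ℝ
  | Sum.inl x, Sum.inl x' => dist x x'
  | Sum.inr y, Sum.inr y' => dist y y'
  | Sum.inl x, Sum.inr y' => dist x θ + dist τ y'
  | Sum.inr y, Sum.inl x' => dist x' θ + dist τ y


/-- `η` is a modulus of weak uniform convexity for `Y`. -/
def IsWucModulus (Y : Type*) [MetricSpace Y] (η : Y → ℝ → ℝ → ℝ) : Prop :=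
  ∀ (a : Y) (r ε : ℝ), 0 < r → ε ∈ Set.Ioc (0:ℝ) 2 →
    η a r ε ∈ Set.Ioc (0:ℝ) 1 ∧
    ∀ x y m : Y, dist a x ≤ r → dist a y ≤ r → ε * r ≤ dist x y →
      IsMidpointOf x y m → dist a m ≤ (1 - η a r ε) * r

/-- The modulus from Lemma 2.2 for the gluing `X ⊔_θ Y`. -/
noncomputable def glueEta {X Y : Type*} (θ : X) (τ : Y)
    (ηX : X → ℝ → ℝ → ℝ) (ηY : Y → ℝ → ℝ → ℝ) : X ⊕ Y → ℝ → ℝ → ℝ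
  | Sum.inl a, r, ε =>
      min (min (ηX a r ε) (ηY τ r ε * ε / 2)) (min (ε / 4) (ηX a r (ε / 4)))
  | Sum.inr a, r, ε =>
      min (min (ηY a r ε) (ηX θ r ε * ε / 2)) (min (ε / 4) (ηY a r (ε / 4)))

section Helpers

variable {Z : Type*} [MetricSpace Z]

lemma geod_between (hZ : GeodesicSpace Z) {x m y : Z}
    (h : dist x m + dist m y = dist x y) :
    ∃ γ : ℝ → Z, IsGeodesicFromTo x y γ ∧ γ (dist x m) = m := by
  obtain ⟨γ₁, h₁, h₁0, h₁e⟩ := hZ x m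
  obtain ⟨γ₂, h₂, h₂0, h₂e⟩ := hZ m y
  set p := dist x m with hp
  set q := dist m y with hq
  have hp0 : 0 ≤ p := dist_nonneg
  have hq0 : 0 ≤ q := dist_nonneg
  refine ⟨fun t => if t ≤ p then γ₁ t else γ₂ (t - p), ⟨?_, ?_, ?_⟩, ?_⟩
  · -- geodesic path
    have key : ∀ s ∈ Set.Icc (0:ℝ) (dist x y), ∀ t ∈ Set.Icc (0:ℝ) (dist x y), s ≤ t →
        dist ((fun t => if t ≤ p then γ₁ t else γ₂ (t - p)) s)
             ((fun t => if t ≤ p then γ₁ t else γ₂ (t - p)) t) = t - s := by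
      intro s hs t ht hst
      rw [← h] at hs ht
      by_cases hsp : s ≤ p <;> by_cases htp : t ≤ p
      · simp only [if_pos hsp, if_pos htp]
        rw [h₁ s ⟨hs.1, hsp⟩ t ⟨ht.1, htp⟩, abs_of_nonpos (by linarith)]
        ring
      · push_neg at htp
        simp only [if_pos hsp, if_neg (not_le.mpr htp)]
        have d1 : dist (γ₁ s) m = p - s := by
          rw [← h₁e, h₁ s ⟨hs.1, hsp⟩ p ⟨hp0, le_refl p⟩, abs_of_nonpos (by linarith)]
          ring
        have d2 : dist m (γ₂ (t - p)) = t - p := by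
          rw [← h₂0, h₂ 0 ⟨le_refl 0, hq0⟩ (t - p) ⟨by linarith, by linarith [ht.2]⟩,
            abs_of_nonpos (by linarith)]
          ring
        have dx : dist x (γ₁ s) = s := by
          rw [← h₁0, h₁ 0 ⟨le_refl 0, hp0⟩ s ⟨hs.1, hsp⟩, abs_of_nonpos (by linarith [hs.1]),
            neg_sub, sub_zero]
        have dy : dist (γ₂ (t - p)) y = q - (t - p) := by
          rw [← h₂e, h₂ (t - p) ⟨by linarith, by linarith [ht.2]⟩ q ⟨hq0, le_refl q⟩,
            abs_of_nonpos (by linarith [ht.2])]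
          ring
        have hle : dist (γ₁ s) (γ₂ (t - p)) ≤ t - s := by
          calc dist (γ₁ s) (γ₂ (t - p)) ≤ dist (γ₁ s) m + dist m (γ₂ (t - p)) := dist_triangle _ _ _
          _ = t - s := by rw [d1, d2]; ring
        have hge : t - s ≤ dist (γ₁ s) (γ₂ (t - p)) := by
          have := dist_triangle4 x (γ₁ s) (γ₂ (t - p)) y
          rw [dx, dy] at this
          linarith [this, h]
        linarith
      · push_neg at hsp; linarith
      · push_neg at hsp htp
        simp only [if_neg (not_le.mpr hsp), if_neg (not_le.mpr htp)]
        rw [h₂ (s - p) ⟨by linarith, by linarith [hs.2]⟩ (t - p) ⟨by linarith, by linarith [ht.2]⟩,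
          abs_of_nonpos (by linarith)]
        ring
    intro s hs t ht
    rcases le_total s t with hst | hst
    · rw [key s hs t ht hst, abs_of_nonpos (by linarith)]; ring
    · rw [dist_comm, key t ht s hs hst, abs_of_nonneg (by linarith)]
  · simp only [if_pos hp0, h₁0]
  · by_cases hLp : dist x y ≤ p
    · have hq0' : q = 0 := le_antisymm (by linarith) hq0
      have hmy : m = y := by rw [← dist_eq_zero, ← hq]; exact hq0'
      simp only [if_pos hLp]
      have : dist x y = p := le_antisymm hLp (by linarith)
      rw [this, h₁e, hmy]
    · simp only [if_neg hLp]
      have : dist x y - p = q := by linarith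
      rw [this, h₂e]
  · simp only [if_pos (le_refl p), h₁e]

lemma midpoint_of_halves (hZ : GeodesicSpace Z) {x m y : Z}
    (h1 : dist x m = dist x y / 2) (h2 : dist m y = dist x y / 2) :
    IsMidpointOf x y m := by
  obtain ⟨γ, hγ, hm⟩ := geod_between hZ (by linarith : dist x m + dist m y = dist x y)
  rw [h1] at hm
  exact ⟨γ, hγ, hm⟩

lemma ball_convex {ηZ : Z → ℝ → ℝ → ℝ} (hη : IsWucModulus Z ηZ)
    {a x y : Z} {r : ℝ} (hx : dist a x ≤ r) (hy : dist a y ≤ r)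
    {γ : ℝ → Z} (hγ : IsGeodesicFromTo x y γ) :
    ∀ t ∈ Set.Icc (0:ℝ) (dist x y), dist a (γ t) ≤ r := by
  set L := dist x y with hL
  have hcont : ContinuousOn (fun t => dist a (γ t)) (Set.Icc (0:ℝ) L) := by
    have hlip : LipschitzOnWith 1 γ (Set.Icc (0:ℝ) L) := by
      apply LipschitzOnWith.of_dist_le_mul
      intro s hs t ht
      rw [hγ.1 s hs t ht, Real.dist_eq]
      simp
    exact Continuous.comp_continuousOn (continuous_const.dist continuous_id) hlip.continuousOn
  obtain ⟨t₀, ht₀, hmax⟩ :=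
    isCompact_Icc.exists_isMaxOn (Set.nonempty_Icc.2 dist_nonneg) hcont
  intro t ht
  refine le_trans (hmax ht) ?_
  by_contra hR
  push_neg at hR
  set R := dist a (γ t₀) with hRdef
  have hr0 : (0:ℝ) ≤ r := le_trans dist_nonneg hx
  have hR0 : 0 < R := lt_of_le_of_lt hr0 hR
  have ht00 : t₀ ≠ 0 := by
    intro h0
    rw [h0, hγ.2.1] at hRdef
    rw [hRdef] at hR; exact absurd hx (not_le.mpr hR)
  have ht0L : t₀ ≠ L := by
    intro h0
    rw [h0, hγ.2.2] at hRdef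
    rw [hRdef] at hR; exact absurd hy (not_le.mpr hR)
  have ht0pos : 0 < t₀ := lt_of_le_of_ne ht₀.1 (Ne.symm ht00)
  have ht0lt : t₀ < L := lt_of_le_of_ne ht₀.2 ht0L
  set δ := min t₀ (L - t₀) with hδdef
  have hδ0 : 0 < δ := lt_min ht0pos (by linarith)
  have hδ1 : δ ≤ t₀ := min_le_left _ _
  have hδ2 : δ ≤ L - t₀ := min_le_right _ _
  have hmem1 : t₀ - δ ∈ Set.Icc (0:ℝ) L := ⟨by linarith, by linarith⟩
  have hmem2 : t₀ + δ ∈ Set.Icc (0:ℝ) L := ⟨by linarith, by linarith⟩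
  set u := γ (t₀ - δ) with hu
  set v := γ (t₀ + δ) with hv
  have huv : dist u v = 2 * δ := by
    rw [hu, hv, hγ.1 _ hmem1 _ hmem2, abs_of_nonpos (by linarith)]; ring
  have hau : dist a u ≤ R := hmax hmem1
  have hav : dist a v ≤ R := hmax hmem2
  set ε' := min (2 * δ / R) 2 with hε'
  have hε'pos : 0 < ε' := lt_min (by positivity) (by norm_num)
  have hε'le : ε' ≤ 2 := min_le_right _ _
  have hεR : ε' * R ≤ dist u v := by
    rw [huv]
    calc ε' * R ≤ (2 * δ / R) * R := by
          apply mul_le_mul_of_nonneg_right (min_le_left _ _) (le_of_lt hR0)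
    _ = 2 * δ := div_mul_cancel₀ _ (ne_of_gt hR0)
  have hmid : IsMidpointOf u v (γ t₀) := by
    refine ⟨fun s => γ (t₀ - δ + s), ⟨?_, ?_, ?_⟩, ?_⟩
    · rw [huv]
      intro s hs t ht
      rw [hγ.1 (t₀ - δ + s) ⟨by linarith [hs.1], by linarith [hs.2]⟩
        (t₀ - δ + t) ⟨by linarith [ht.1], by linarith [ht.2]⟩]
      congr 1; ring
    · show γ (t₀ - δ + 0) = u
      rw [add_zero]
    · rw [huv]
      show γ (t₀ - δ + 2 * δ) = v
      rw [hv]; congr 1; ring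
    · rw [huv]
      show γ (t₀ - δ + 2 * δ / 2) = γ t₀
      congr 1; ring
  have hbound := (hη a R ε' hR0 ⟨hε'pos, hε'le⟩).2 u v (γ t₀) hau hav hεR hmid
  have hηpos := (hη a R ε' hR0 ⟨hε'pos, hε'le⟩).1.1
  nlinarith

end Helpers
lemma pointGlueDist_comm {X Y : Type*} [MetricSpace X] [MetricSpace Y] (θ : X) (τ : Y)
    (u v : X ⊕ Y) : pointGlueDist θ τ u v = pointGlueDist θ τ v u := by
  cases u <;> cases v <;> simp [pointGlueDist, dist_comm]

lemma pointGlueDist_swap {X Y : Type*} [MetricSpace X] [MetricSpace Y] (θ : X) (τ : Y)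
    (u v : X ⊕ Y) : pointGlueDist τ θ u.swap v.swap = pointGlueDist θ τ u v := by
  cases u <;> cases v <;> simp [pointGlueDist, Sum.swap, dist_comm, add_comm]

lemma mixed_case {X Y : Type*} [MetricSpace X] [MetricSpace Y]
    (hX : GeodesicSpace X) {ηX : X → ℝ → ℝ → ℝ} (hηX : IsWucModulus X ηX)
    (θ : X) (τ : Y) (a : X) {r ε : ℝ} (hr : 0 < r) (hε : ε ∈ Set.Ioc (0:ℝ) 2)
    (x' : X) (y' : Y) (m : X ⊕ Y)
    (hax : dist a x' ≤ r)
    (hay : dist a θ + dist τ y' ≤ r)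
    (hxy : ε * r ≤ dist x' θ + dist τ y')
    (hxm : pointGlueDist θ τ (Sum.inl x') m = (dist x' θ + dist τ y') / 2)
    (hmy : pointGlueDist θ τ m (Sum.inr y') = (dist x' θ + dist τ y') / 2) :
    pointGlueDist θ τ (Sum.inl a) m ≤ (1 - min (ε / 4) (ηX a r (ε / 4))) * r := by
  obtain ⟨hε0, hε2⟩ := hε
  have hp0 : 0 ≤ dist x' θ := dist_nonneg
  have hq0 : 0 ≤ dist τ y' := dist_nonneg
  have hminr : min (ε / 4) (ηX a r (ε / 4)) * r ≤ (ε / 4) * r :=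
    mul_le_mul_of_nonneg_right (min_le_left _ _) hr.le
  cases m with
  | inr m' =>
    simp only [pointGlueDist] at hxm ⊢
    have haθ : dist a θ ≤ r - dist τ y' := by linarith
    nlinarith [hminr, hxm, haθ, hxy]
  | inl m' =>
    simp only [pointGlueDist] at hxm hmy ⊢
    set p := dist x' θ with hpdef
    set q := dist τ y' with hqdef
    -- hxm : dist x' m' = (p + q) / 2 ; hmy : dist m' θ + q = (p + q) / 2
    have hd2 : dist m' θ = (p - q) / 2 := by linarith
    have hqp : q ≤ p := by
      have := dist_nonneg (x := m') (y := θ); linarith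
    have haθ : dist a θ ≤ r - q := by linarith
    by_cases hcase : p - q ≤ ε * r / 4
    · have htri := dist_triangle a θ m'
      rw [dist_comm θ m'] at htri
      nlinarith [hminr, htri, hd2, haθ, hxy]
    · push_neg at hcase
      have hsum : dist x' m' + dist m' θ = dist x' θ := by rw [hxm, hd2]; ring
      obtain ⟨γ, hγ, hγm⟩ := geod_between hX hsum
      have haθ' : dist a θ ≤ r := by linarith
      have hqmem : q ∈ Set.Icc (0:ℝ) (dist x' θ) := ⟨hq0, by linarith⟩
      have haw : dist a (γ q) ≤ r := ball_convex hηX hax haθ' hγ q hqmem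
      have hwm : dist (γ q) m' = (p - q) / 2 := by
        rw [← hγm, hγ.1 q hqmem (dist x' m') ⟨dist_nonneg, by rw [hxm]; linarith⟩, hxm,
          abs_of_nonpos (by linarith)]
        ring
      have hwθ : dist (γ q) θ = p - q := by
        conv_lhs => rw [← hγ.2.2]
        rw [hγ.1 q hqmem (dist x' θ) ⟨dist_nonneg, le_refl _⟩,
          abs_of_nonpos (by linarith)]
        ring
      have hmid : IsMidpointOf (γ q) θ m' := by
        apply midpoint_of_halves hX
        · rw [hwm, hwθ]
        · rw [hd2, hwθ]
      have hε4 : ε / 4 ∈ Set.Ioc (0:ℝ) 2 := ⟨by linarith, by linarith⟩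
      have hbound := (hηX a r (ε / 4) hr hε4).2 (γ q) θ m' haw haθ'
        (by rw [hwθ]; linarith) hmid
      have hmin2 : min (ε / 4) (ηX a r (ε / 4)) ≤ ηX a r (ε / 4) := min_le_right _ _
      nlinarith [hbound, mul_le_mul_of_nonneg_right hmin2 hr.le]

lemma key_lemma {X Y : Type*} [MetricSpace X] [MetricSpace Y]
    (hX : GeodesicSpace X) (hY : GeodesicSpace Y)
    {ηX : X → ℝ → ℝ → ℝ} {ηY : Y → ℝ → ℝ → ℝ}
    (hηX : IsWucModulus X ηX) (hηY : IsWucModulus Y ηY)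
    (hmonoY : ∀ (a : Y) (ε r r' : ℝ), 0 < r → r ≤ r' → ηY a r' ε ≤ ηY a r ε)
    (θ : X) (τ : Y) (a : X) {r ε : ℝ} (hr : 0 < r) (hε : ε ∈ Set.Ioc (0:ℝ) 2)
    (x y m : X ⊕ Y)
    (hax : pointGlueDist θ τ (Sum.inl a) x ≤ r) (hay : pointGlueDist θ τ (Sum.inl a) y ≤ r)
    (hxy : ε * r ≤ pointGlueDist θ τ x y)
    (hxm : pointGlueDist θ τ x m = pointGlueDist θ τ x y / 2)
    (hmy : pointGlueDist θ τ m y = pointGlueDist θ τ x y / 2) :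
    pointGlueDist θ τ (Sum.inl a) m ≤
      (1 - min (min (ηX a r ε) (ηY τ r ε * ε / 2)) (min (ε / 4) (ηX a r (ε / 4)))) * r := by
  obtain ⟨hε0, hε2⟩ := hε
  set E := min (min (ηX a r ε) (ηY τ r ε * ε / 2)) (min (ε / 4) (ηX a r (ε / 4))) with hE
  have hEε4 : E ≤ ε / 4 := le_trans (min_le_right _ _) (min_le_left _ _)
  have hEηX : E ≤ ηX a r ε := le_trans (min_le_left _ _) (min_le_left _ _)
  have hEηX4 : E ≤ ηX a r (ε / 4) := le_trans (min_le_right _ _) (min_le_right _ _)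
  have hEηY : E ≤ ηY τ r ε * ε / 2 := le_trans (min_le_left _ _) (min_le_right _ _)
  cases x with
  | inl x' =>
    cases y with
    | inl y' =>
      simp only [pointGlueDist] at hax hay hxy hxm hmy
      cases m with
      | inl m' =>
        simp only [pointGlueDist] at hxm hmy ⊢
        have hbound := (hηX a r ε hr ⟨hε0, hε2⟩).2 x' y' m' hax hay hxy
          (midpoint_of_halves hX hxm hmy)
        nlinarith [mul_le_mul_of_nonneg_right hEηX hr.le]
      | inr m'' =>
        simp only [pointGlueDist] at hxm hmy ⊢
        -- hxm : dist x' θ + dist τ m'' = L/2 ; hmy : dist y' θ + dist τ m'' = L/2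
        have htri := dist_triangle x' θ y'
        rw [dist_comm θ y'] at htri
        have hm0 : dist τ m'' = 0 :=
          le_antisymm (by linarith) dist_nonneg
        have hθ1 : dist x' θ = dist x' y' / 2 := by linarith
        have hθ2 : dist θ y' = dist x' y' / 2 := by rw [dist_comm]; linarith
        have hbound := (hηX a r ε hr ⟨hε0, hε2⟩).2 x' y' θ hax hay hxy
          (midpoint_of_halves hX hθ1 hθ2)
        nlinarith [mul_le_mul_of_nonneg_right hEηX hr.le, hm0]
    | inr y' =>
      simp only [pointGlueDist] at hax hay hxy hxm hmy
      have h := mixed_case hX hηX θ τ a hr ⟨hε0, hε2⟩ x' y' m hax hay hxy hxm hmy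
      have : min (ε / 4) (ηX a r (ε / 4)) * r ≥ E * r :=
        mul_le_mul_of_nonneg_right (le_min hEε4 hEηX4) hr.le
      nlinarith [h]
  | inr x'' =>
    cases y with
    | inl y'' =>
      rw [pointGlueDist_comm θ τ (Sum.inr x'') m] at hxm
      rw [pointGlueDist_comm θ τ m (Sum.inl y'')] at hmy
      simp only [pointGlueDist] at hax hay hxy hxm hmy
      have h := mixed_case hX hηX θ τ a hr ⟨hε0, hε2⟩ y'' x'' m hay hax hxy hmy hxm
      have : min (ε / 4) (ηX a r (ε / 4)) * r ≥ E * r :=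
        mul_le_mul_of_nonneg_right (le_min hEε4 hEηX4) hr.le
      nlinarith [h]
    | inr y'' =>
      simp only [pointGlueDist] at hax hay hxy hxm hmy
      have htri := dist_triangle x'' τ y''
      rw [dist_comm x'' τ] at htri
      cases m with
      | inl m'' =>
        simp only [pointGlueDist] at hxm hmy ⊢
        -- hxm : dist m'' θ + dist τ x'' = L/2 ; hmy : dist m'' θ + dist τ y'' = L/2
        have hm0 : dist m'' θ = 0 := le_antisymm (by linarith) dist_nonneg
        have htri2 := dist_triangle a θ m''
        rw [dist_comm θ m''] at htri2
        nlinarith [mul_le_mul_of_nonneg_right hEε4 hr.le, hm0, htri2]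
      | inr m' =>
        simp only [pointGlueDist] at hxm hmy ⊢
        set c := dist a θ with hcdef
        have hc0 : 0 ≤ c := dist_nonneg
        set ρ := r - c with hρdef
        have hρbig : ε * r / 2 ≤ ρ := by linarith
        have hρpos : 0 < ρ := by nlinarith
        have hρler : ρ ≤ r := by linarith
        have hmid : IsMidpointOf x'' y'' m' := midpoint_of_halves hY hxm hmy
        have hb := (hηY τ ρ ε hρpos ⟨hε0, hε2⟩).2 x'' y'' m'
          (by linarith) (by linarith)
          (le_trans (by nlinarith) hxy) hmid
        have hmono := hmonoY τ ε ρ r hρpos hρler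
        have hηY0 : 0 < ηY τ r ε := (hηY τ r ε hr ⟨hε0, hε2⟩).1.1
        have s1 : dist τ m' ≤ (1 - ηY τ r ε) * ρ := by
          nlinarith [hb, mul_le_mul_of_nonneg_right hmono hρpos.le]
        have s2 : ηY τ r ε * (ε * r / 2) ≤ ηY τ r ε * ρ :=
          mul_le_mul_of_nonneg_left hρbig hηY0.le
        have s3 : E * r ≤ (ηY τ r ε * ε / 2) * r :=
          mul_le_mul_of_nonneg_right hEηY hr.le
        nlinarith [s1, s2, s3]

/-- **Lemma 2.2**: the gluing of two weakly uniformly convex geodesic spaces with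
monotone moduli `η_X, η_Y` is weakly uniformly convex with the modulus `glueEta`
(stated for the gluing pseudometric `pointGlueDist` on `X ⊕ Y`, whose metric quotient
is `X ⊔_θ Y`). -/
theorem gluing_weaklyUniformlyConvex
    {X Y : Type*} [MetricSpace X] [MetricSpace Y]
    (hX : GeodesicSpace X) (hY : GeodesicSpace Y)
    (ηX : X → ℝ → ℝ → ℝ) (ηY : Y → ℝ → ℝ → ℝ)
    (hηX : IsWucModulus X ηX) (hηY : IsWucModulus Y ηY)
    (hmonoX : ∀ (a : X) (ε r r' : ℝ), 0 < r → r ≤ r' → ηX a r' ε ≤ ηX a r ε)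
    (hmonoY : ∀ (a : Y) (ε r r' : ℝ), 0 < r → r ≤ r' → ηY a r' ε ≤ ηY a r ε)
    (θ : X) (τ : Y) :
    ∀ (a : X ⊕ Y) (r ε : ℝ), 0 < r → ε ∈ Set.Ioc (0:ℝ) 2 →
      glueEta θ τ ηX ηY a r ε ∈ Set.Ioc (0:ℝ) 1 ∧
      ∀ x y m : X ⊕ Y, pointGlueDist θ τ a x ≤ r → pointGlueDist θ τ a y ≤ r →
        ε * r ≤ pointGlueDist θ τ x y →
        -- m is a midpoint of a geodesic segment from x to y in the gluing
        (∃ γ : ℝ → X ⊕ Y,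
          (∀ s ∈ Set.Icc (0:ℝ) (pointGlueDist θ τ x y),
            ∀ t ∈ Set.Icc (0:ℝ) (pointGlueDist θ τ x y),
              pointGlueDist θ τ (γ s) (γ t) = |s - t|) ∧
          γ 0 = x ∧ γ (pointGlueDist θ τ x y) = y ∧
          γ (pointGlueDist θ τ x y / 2) = m) →
        pointGlueDist θ τ a m ≤ (1 - glueEta θ τ ηX ηY a r ε) * r := by
  intro a r ε hr hε
  obtain ⟨hε0, hε2⟩ := hε
  have hε4 : ε / 4 ∈ Set.Ioc (0:ℝ) 2 := ⟨by linarith, by linarith⟩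
  constructor
  · cases a with
    | inl a' =>
      have h1 := (hηX a' r ε hr ⟨hε0, hε2⟩).1
      have h2 := (hηY τ r ε hr ⟨hε0, hε2⟩).1
      have h3 := (hηX a' r (ε / 4) hr hε4).1
      simp only [glueEta]
      exact ⟨lt_min (lt_min h1.1 (by nlinarith [h2.1])) (lt_min (by linarith) h3.1),
        le_trans (le_trans (min_le_left _ _) (min_le_left _ _)) h1.2⟩
    | inr a' =>
      have h1 := (hηY a' r ε hr ⟨hε0, hε2⟩).1
      have h2 := (hηX θ r ε hr ⟨hε0, hε2⟩).1
      have h3 := (hηY a' r (ε / 4) hr hε4).1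
      simp only [glueEta]
      exact ⟨lt_min (lt_min h1.1 (by nlinarith [h2.1])) (lt_min (by linarith) h3.1),
        le_trans (le_trans (min_le_left _ _) (min_le_left _ _)) h1.2⟩
  · intro x y m hax hay hxy hmid
    obtain ⟨γ, hγ, h0, hLend, hm⟩ := hmid
    set L := pointGlueDist θ τ x y with hLdef
    have hL0 : 0 < L := lt_of_lt_of_le (mul_pos hε0 hr) hxy
    have hxm : pointGlueDist θ τ x m = L / 2 := by
      rw [← h0, ← hm, hγ 0 ⟨le_refl 0, hL0.le⟩ (L / 2) ⟨by linarith, by linarith⟩,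
        abs_of_nonpos (by linarith)]
      ring
    have hmy : pointGlueDist θ τ m y = L / 2 := by
      rw [← hm, ← hLend, hγ (L / 2) ⟨by linarith, by linarith⟩ L ⟨hL0.le, le_refl L⟩,
        abs_of_nonpos (by linarith)]
      ring
    cases a with
    | inl a' =>
      simp only [glueEta]
      exact key_lemma hX hY hηX hηY hmonoY θ τ a' hr ⟨hε0, hε2⟩ x y m hax hay hxy hxm hmy
    | inr a' =>
      simp only [glueEta]
      have ea : ∀ v : X ⊕ Y, pointGlueDist τ θ (Sum.inl a') v.swap
          = pointGlueDist θ τ (Sum.inr a') v :=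
        fun v => pointGlueDist_swap θ τ (Sum.inr a') v
      have h := key_lemma hY hX hηY hηX hmonoX τ θ a' hr ⟨hε0, hε2⟩ x.swap y.swap m.swap
        (by rw [ea]; exact hax) (by rw [ea]; exact hay)
        (by rw [pointGlueDist_swap]; exact hxy)
        (by rw [pointGlueDist_swap, pointGlueDist_swap]; exact hxm)
        (by rw [pointGlueDist_swap, pointGlueDist_swap]; exact hmy)
      rw [ea m] at h
      exact h
end

section
/- In the cocycle setting, write D_n(x) = d(y, a_n(x)y) and D_n(x,k) = d(y, a_{n−k}(T^k x)y). Let A > 0 and let x ∈ X be such that lim_{n→∞} D_n(x)/n = A and such that for every ε > 0 there exist M ∈ ℕ and infinitely many n ∈ ℕ with D_n(x) − D_n(x,k) ≥ (A − ε)k for every k ∈ [M,n]. Then for all sequences (α_i) ⊆ (0,1] and (p_i) ⊆ ℕ there exist sequences (K_i), (n_i) ⊆ ℕ satisfying for all i ≥ 1: (i) p_i ≤ K_i, K_{i+1} < n_i < n_{i+1}, and D_{n_{i+1}}(x) ≥ max{D_{n_i}(x), A·n_i}; (ii) for all k ∈ [K_i, n_i], |D_k(x) − A·k| ≤ A·k/2^i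 and (1 − min{1/2^i, α_i})·D_k(x) + d(a_k(x)y, a_{n_i}(x)y) ≤ D_{n_i}(x). -/
open Set Filter MeasureTheory

/-- **Lemma 3.1**: construction of the sequences `(K_i)` and `(n_i)`, where
`D_n(x) = d(y, aₙ(x)y)` and `D_n(x,k) = d(y, a_{n-k}(T^k x)y)`. -/
theorem sequences_Ki_ni
    {Y : Type*} [MetricSpace Y] {X : Type*}
    (T : X → X) (D : Set Y) (w : X → Y → Y)
    (hw : ∀ x, Set.MapsTo (w x) D D ∧ LipschitzOnWith 1 (w x) D)
    (y : Y) (hy : y ∈ D)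
    (a : ℕ → X → Y → Y) (ha0 : ∀ x, a 0 x = id)
    (harec : ∀ n x, a (n + 1) x = w x ∘ a n (T x))
    (A : ℝ) (hApos : 0 < A) (x : X)
    (hlim : Tendsto (fun n : ℕ => dist y (a n x y) / n) atTop (nhds A))
    (hE : ∀ ε : ℝ, 0 < ε → ∃ M : ℕ, ∀ N : ℕ, ∃ n : ℕ, N ≤ n ∧
      ∀ k : ℕ, M ≤ k → k ≤ n →
        (A - ε) * k ≤ dist y (a n x y) - dist y (a (n - k) (T^[k] x) y)) :
    ∀ α : ℕ → ℝ, (∀ i, α i ∈ Set.Ioc (0:ℝ) 1) → ∀ p : ℕ → ℕ,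
      ∃ K n : ℕ → ℕ, ∀ i : ℕ, 1 ≤ i →
        -- (i)
        (p i ≤ K i ∧ K (i + 1) < n i ∧ n i < n (i + 1) ∧
          max (dist y (a (n i) x y)) (A * n i) ≤ dist y (a (n (i + 1)) x y)) ∧
        -- (ii)
        (∀ k : ℕ, K i ≤ k → k ≤ n i →
          |dist y (a k x y) - A * k| ≤ A * k / 2 ^ i ∧
          (1 - min (1 / 2 ^ i) (α i)) * dist y (a k x y) +
              dist (a k x y) (a (n i) x y) ≤ dist y (a (n i) x y)) := by
  intro α hα p
  -- every `a m x'` maps `D` into `D`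
  have hmem : ∀ m x' u, u ∈ D → a m x' u ∈ D := by
    intro m
    induction m with
    | zero => intro x' u hu; rw [ha0]; exact hu
    | succ m ih =>
      intro x' u hu
      rw [harec]
      exact (hw x').1 (ih (T x') u hu)
  -- every `a m x'` is nonexpansive on `D`
  have hlip : ∀ m x', ∀ u ∈ D, ∀ v ∈ D, dist (a m x' u) (a m x' v) ≤ dist u v := by
    intro m
    induction m with
    | zero => intro x' u _ v _; rw [ha0]; simp
    | succ m ih =>
      intro x' u hu v hv
      rw [harec]
      simp only [Function.comp_apply]
      calc dist (w x' (a m (T x') u)) (w x' (a m (T x') v))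
          ≤ ((1 : NNReal) : ℝ) * dist (a m (T x') u) (a m (T x') v) :=
            (hw x').2.dist_le_mul (x := a m (T x') u) (y := a m (T x') v)
              (hmem m (T x') u hu) (hmem m (T x') v hv)
        _ = dist (a m (T x') u) (a m (T x') v) := by norm_num
        _ ≤ dist u v := ih (T x') u hu v hv
  -- cocycle property
  have hcoc : ∀ k m x', a (k + m) x' y = a k x' (a m (T^[k] x') y) := by
    intro k
    induction k with
    | zero => intro m x'; simp [ha0]
    | succ k ih =>
      intro m x'
      have hkm : k + 1 + m = (k + m) + 1 := by omega
      rw [hkm, harec, harec]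
      simp only [Function.comp_apply]
      rw [ih m (T x'), Function.iterate_succ_apply]
  -- key distance bound
  have hdistle : ∀ k n' : ℕ, k ≤ n' →
      dist (a k x y) (a n' x y) ≤ dist y (a (n' - k) (T^[k] x) y) := by
    intro k n' hkn
    have e := hcoc k (n' - k) x
    rw [Nat.add_sub_cancel' hkn] at e
    rw [e]
    exact hlip k x y hy _ (hmem _ _ _ hy)
  -- consequence of the limit: linear bounds
  have hE1 : ∀ η : ℝ, 0 < η → ∃ N : ℕ, ∀ k, N ≤ k →
      |dist y (a k x y) - A * k| ≤ η * k := by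
    intro η hη
    obtain ⟨N, hN⟩ := Metric.tendsto_atTop.mp hlim η hη
    refine ⟨max N 1, fun k hk => ?_⟩
    have hk1 : 1 ≤ k := le_trans (le_max_right N 1) hk
    have hkpos : (0:ℝ) < (k : ℝ) := by exact_mod_cast hk1
    have h := hN k (le_trans (le_max_left N 1) hk)
    rw [Real.dist_eq] at h
    have heq : dist y (a k x y) - A * k = (dist y (a k x y) / k - A) * k := by
      rw [sub_mul, div_mul_cancel₀ _ hkpos.ne']
    rw [heq, abs_mul, abs_of_pos hkpos]
    exact mul_le_mul_of_nonneg_right h.le hkpos.le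
  -- divergence
  have hE2 : ∀ B : ℝ, ∃ N : ℕ, ∀ m, N ≤ m → B ≤ dist y (a m x y) := by
    intro B
    obtain ⟨N1, hN1⟩ := hE1 (A / 2) (by linarith)
    obtain ⟨m0, hm0⟩ := exists_nat_gt (2 * B / A)
    refine ⟨max N1 m0, fun m hm => ?_⟩
    have h1 := (abs_le.mp (hN1 m (le_trans (le_max_left _ _) hm))).1
    have h2 : (m0 : ℝ) ≤ (m : ℝ) := Nat.cast_le.mpr (le_trans (le_max_right _ _) hm)
    have h3 : 2 * B / A ≤ (m : ℝ) := le_trans hm0.le h2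
    have h4 : 2 * B ≤ (m : ℝ) * A := (div_le_iff₀ hApos).mp h3
    linarith
  -- positivity of the epsilons
  have hcpos : ∀ i : ℕ, 0 < min (1 / (2:ℝ) ^ i) (α i) :=
    fun i => lt_min (by positivity) (hα i).1
  have hεpos : ∀ i : ℕ, 0 < A * min (1 / (2:ℝ) ^ i) (α i) / 4 :=
    fun i => div_pos (mul_pos hApos (hcpos i)) (by norm_num)
  -- choose M and pick from hE
  have hEε : ∀ i : ℕ, ∃ M : ℕ, ∀ N : ℕ, ∃ n : ℕ, N ≤ n ∧ ∀ k : ℕ, M ≤ k → k ≤ n →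
      (A - A * min (1 / (2:ℝ) ^ i) (α i) / 4) * k ≤
        dist y (a n x y) - dist y (a (n - k) (T^[k] x) y) :=
    fun i => hE _ (hεpos i)
  choose M hM using hEε
  choose pick hpickge hpickgood using hM
  -- choose thresholds from the limit
  have hNhex : ∀ i : ℕ, ∃ N : ℕ, ∀ k, N ≤ k →
      |dist y (a k x y) - A * k| ≤ (A * min (1 / (2:ℝ) ^ i) (α i) / 2) * k :=
    fun i => hE1 _ (div_pos (mul_pos hApos (hcpos i)) (by norm_num))
  choose Nh hNh using hNhex
  choose thr hthr using hE2
  set K : ℕ → ℕ := fun i => max (max (p i) (M i)) (Nh i) with hKdef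
  obtain ⟨n', hn'0, hn'succ⟩ : ∃ n' : ℕ → ℕ, n' 0 = pick 1 (K 2 + 1) ∧
      ∀ j, n' (j + 1) = pick (j + 2)
        (max (max (K (j + 3) + 1) (n' j + 1))
             (thr (max (dist y (a (n' j) x y)) (A * (n' j : ℝ))))) :=
    ⟨fun i => Nat.rec (pick 1 (K 2 + 1))
        (fun j prev => pick (j + 2)
          (max (max (K (j + 3) + 1) (prev + 1))
               (thr (max (dist y (a prev x y)) (A * (prev : ℝ)))))) i,
      rfl, fun j => rfl⟩
  have hKlt : ∀ j, K (j + 2) + 1 ≤ n' j := by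
    intro j
    cases j with
    | zero => rw [hn'0]; exact hpickge 1 _
    | succ m =>
      have e : m + 1 + 2 = m + 3 := by omega
      rw [e, hn'succ m]
      exact le_trans (le_trans (le_max_left _ _) (le_max_left _ _)) (hpickge _ _)
  have hmono : ∀ j, n' j + 1 ≤ n' (j + 1) := by
    intro j
    rw [hn'succ j]
    exact le_trans (le_trans (le_max_right _ _) (le_max_left _ _)) (hpickge _ _)
  have hbig : ∀ j, max (dist y (a (n' j) x y)) (A * (n' j : ℝ)) ≤
      dist y (a (n' (j + 1)) x y) := by
    intro j
    apply hthr
    rw [hn'succ j]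
    exact le_trans (le_max_right _ _) (hpickge _ _)
  have hgood : ∀ j, ∀ k : ℕ, M (j + 1) ≤ k → k ≤ n' j →
      (A - A * min (1 / (2:ℝ) ^ (j + 1)) (α (j + 1)) / 4) * k ≤
        dist y (a (n' j) x y) - dist y (a (n' j - k) (T^[k] x) y) := by
    intro j
    cases j with
    | zero => rw [hn'0]; exact hpickgood 1 _
    | succ m =>
      have e : m + 1 + 1 = m + 2 := by omega
      rw [e, hn'succ m]
      exact hpickgood (m + 2) _
  refine ⟨K, fun i => n' (i - 1), ?_⟩
  intro i hi
  obtain ⟨j, rfl⟩ : ∃ j, i = j + 1 := ⟨i - 1, (Nat.succ_pred_eq_of_pos hi).symm⟩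
  simp only [Nat.add_sub_cancel]
  constructor
  · refine ⟨le_trans (le_max_left _ _) (le_max_left _ _), ?_, ?_, hbig j⟩
    · exact Nat.lt_of_succ_le (hKlt j)
    · exact Nat.lt_of_succ_le (hmono j)
  · intro k hKk hkn
    set c : ℝ := min (1 / (2:ℝ) ^ (j + 1)) (α (j + 1)) with hcdef
    have hc0 : 0 < c := hcpos (j + 1)
    have hc1 : c ≤ 1 := le_trans (min_le_right _ _) (hα (j + 1)).2
    have hc2 : c ≤ 1 / (2:ℝ) ^ (j + 1) := min_le_left _ _
    have hkr0 : (0:ℝ) ≤ (k : ℝ) := Nat.cast_nonneg k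
    have habs := hNh (j + 1) k (le_trans (le_max_right _ _) hKk)
    have hMk : M (j + 1) ≤ k :=
      le_trans (le_trans (le_max_right _ _) (le_max_left _ _)) hKk
    have hgd := hgood j k hMk hkn
    have hd := hdistle k (n' j) hkn
    have hup := (abs_le.mp habs).2
    constructor
    · have h2i : (0:ℝ) < (2:ℝ) ^ (j + 1) := by positivity
      have hA2 : A * c / 2 * k ≤ A * (1 / (2:ℝ) ^ (j + 1)) * k := by
        have h := mul_le_mul_of_nonneg_right (mul_le_mul_of_nonneg_left hc2 hApos.le) hkr0
        linarith [mul_nonneg (mul_nonneg hApos.le hc0.le) hkr0]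
      have he : A * (1 / (2:ℝ) ^ (j + 1)) * k = A * k / 2 ^ (j + 1) := by ring
      calc |dist y (a k x y) - A * k| ≤ A * c / 2 * k := habs
        _ ≤ A * (1 / (2:ℝ) ^ (j + 1)) * k := hA2
        _ = A * k / 2 ^ (j + 1) := he
    · have h1c : (0:ℝ) ≤ 1 - c := by linarith
      have hmul := mul_le_mul_of_nonneg_left hup h1c
      nlinarith [mul_nonneg (mul_nonneg hApos.le hc0.le) hkr0,
        mul_nonneg (mul_nonneg (mul_nonneg hApos.le hc0.le) hc0.le) hkr0]
end

section
/- Let Y be a complete Busemann convex geodesic space, y ∈ Y, (L_i)_{i≥1} a nondecreasing sequence of positive reals with L_i → ∞, and for each i ≥ 1 let γ_i : [0, L_i] → Y be a geodesic path with γ_i(0) = y. Assume d(γ_{i+1}(L_i), γ_i(L_i)) ≤ L_i/2^{i+1} for all i ≥ 1. Then: (a) for every R > 0 and every i with L_i ≥ R, d(γ_{i+1}(R), γ_i(R)) ≤ R/2^{i+1}; (b) there exists a geodesic ray γ : [0,∞) → Y with γ(0) = y such that d(γ(R), γ_i(R)) ≤ R/2^i for every R > 0 and every i with L_i ≥ R.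 -/
open Set Filter MeasureTheory

open Topology

/-- Convergence of geodesic paths to a geodesic ray in a complete Busemann convex
geodesic space: if `d(γ_{i+1}(L_i), γ_i(L_i)) ≤ L_i/2^{i+1}`, then the paths converge
to a geodesic ray `γ` issuing at `y` with `d(γ(R), γ_i(R)) ≤ R/2^i` whenever `L_i ≥ R`. -/
theorem geodesics_converge_to_ray
    {Y : Type*} [MetricSpace Y] [CompleteSpace Y]
    (hgeo : GeodesicSpace Y) (hbus : BusemannConvex Y)
    (y : Y) (L : ℕ → ℝ) (γ : ℕ → ℝ → Y)
    (hLpos : ∀ i : ℕ, 1 ≤ i → 0 < L i)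
    (hLmono : ∀ i : ℕ, 1 ≤ i → L i ≤ L (i + 1))
    (hLtop : Tendsto L atTop atTop)
    (hγ : ∀ i : ℕ, 1 ≤ i → IsGeodesicPath (L i) (γ i) ∧ γ i 0 = y)
    (hclose : ∀ i : ℕ, 1 ≤ i → dist (γ (i + 1) (L i)) (γ i (L i)) ≤ L i / 2 ^ (i + 1)) :
    -- (a)
    (∀ R : ℝ, 0 < R → ∀ i : ℕ, 1 ≤ i → R ≤ L i →
      dist (γ (i + 1) R) (γ i R) ≤ R / 2 ^ (i + 1)) ∧
    -- (b)
    (∃ g : ℝ → Y, IsGeodesicRay g ∧ g 0 = y ∧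
      ∀ R : ℝ, 0 < R → ∀ i : ℕ, 1 ≤ i → R ≤ L i →
        dist (g R) (γ i R) ≤ R / 2 ^ i) := by
  -- monotonicity of L
  have hmono : ∀ i j : ℕ, 1 ≤ i → i ≤ j → L i ≤ L j := by
    intro i j hi hij
    induction j, hij using Nat.le_induction with
    | base => exact le_refl _
    | succ j hij ih => exact ih.trans (hLmono j (hi.trans hij))
  -- part (a)
  have parta : ∀ R : ℝ, 0 < R → ∀ i : ℕ, 1 ≤ i → R ≤ L i →
      dist (γ (i + 1) R) (γ i R) ≤ R / 2 ^ (i + 1) := by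
    intro R hR i hi hRL
    have hLi : 0 < L i := hLpos i hi
    have hgi := hγ i hi
    have hgi1 := hγ (i + 1) (by omega)
    have hsub : IsGeodesicPath (L i) (γ (i + 1)) := by
      intro s hs t ht
      exact hgi1.1 s ⟨hs.1, hs.2.trans (hLmono i hi)⟩ t ⟨ht.1, ht.2.trans (hLmono i hi)⟩
    have ht01 : R / L i ∈ Set.Icc (0 : ℝ) 1 :=
      ⟨div_nonneg hR.le hLi.le, (div_le_one hLi).2 hRL⟩
    have hb := hbus (L i) (L i) (γ (i + 1)) (γ i) hLi.le hLi.le hsub hgi.1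
      (by rw [hgi1.2, hgi.2]) (R / L i) ht01
    rw [div_mul_cancel₀ _ hLi.ne'] at hb
    calc dist (γ (i + 1) R) (γ i R)
        ≤ R / L i * dist (γ (i + 1) (L i)) (γ i (L i)) := hb
      _ ≤ R / L i * (L i / 2 ^ (i + 1)) :=
          mul_le_mul_of_nonneg_left (hclose i hi) (div_nonneg hR.le hLi.le)
      _ = R / 2 ^ (i + 1) := by field_simp
  refine ⟨parta, ?_⟩
  -- telescoping bound
  have tele : ∀ R : ℝ, 0 < R → ∀ i : ℕ, 1 ≤ i → R ≤ L i → ∀ j, i ≤ j →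
      dist (γ j R) (γ i R) ≤ R / 2 ^ i - R / 2 ^ j := by
    intro R hR i hi hRL j hij
    induction j, hij using Nat.le_induction with
    | base => simp
    | succ j hij ih =>
      have hRLj : R ≤ L j := hRL.trans (hmono i j hi hij)
      have h1 := parta R hR j (hi.trans hij) hRLj
      calc dist (γ (j + 1) R) (γ i R)
          ≤ dist (γ (j + 1) R) (γ j R) + dist (γ j R) (γ i R) := dist_triangle _ _ _
        _ ≤ R / 2 ^ (j + 1) + (R / 2 ^ i - R / 2 ^ j) := add_le_add h1 ih
        _ = R / 2 ^ i - R / 2 ^ (j + 1) := by rw [pow_succ]; ring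
  -- convergence of the sequence (γ k R) for each R > 0
  have hlim : ∀ R : ℝ, 0 < R → ∃ p : Y, Tendsto (fun k => γ k R) atTop (𝓝 p) := by
    intro R hR
    obtain ⟨N0, hN0⟩ := (hLtop.eventually_ge_atTop R).exists_forall_of_atTop
    set N := max N0 1 with hN
    have hNk : ∀ k, N ≤ k → R ≤ L k := fun k hk =>
      hN0 k ((le_max_left _ _).trans hk)
    have hcauchy : CauchySeq (fun n => γ (N + n) R) := by
      apply cauchySeq_of_le_geometric (r := 1/2) (C := R / 2 ^ N) (by norm_num)
      intro n
      have h1 : 1 ≤ N + n := (le_max_right N0 1).trans (Nat.le_add_right _ _)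
      have h2 : R ≤ L (N + n) := hNk _ (Nat.le_add_right _ _)
      have h3 : dist (γ (N + n) R) (γ (N + n + 1) R) ≤ R / 2 ^ (N + n + 1) := by
        rw [dist_comm]; exact parta R hR (N + n) h1 h2
      refine h3.trans ?_
      have : R / 2 ^ N * (1 / 2) ^ n = R / 2 ^ (N + n) := by
        rw [pow_add, div_pow, one_pow]; ring
      rw [this]
      apply div_le_div_of_nonneg_left hR.le (by positivity)
      exact pow_le_pow_right₀ one_le_two (by omega)
    obtain ⟨p, hp⟩ := cauchySeq_tendsto_of_complete hcauchy
    refine ⟨p, ?_⟩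
    have hp' : Tendsto (fun n => γ (n + N) R) atTop (𝓝 p) := by
      simpa [Nat.add_comm] using hp
    exact (tendsto_add_atTop_iff_nat N).1 hp'
  -- definition of g
  classical
  set g : ℝ → Y := fun R => if h : 0 < R then (hlim R h).choose else y with hg
  have hglim : ∀ R : ℝ, 0 ≤ R → Tendsto (fun k => γ k R) atTop (𝓝 (g R)) := by
    intro R hR
    rcases hR.lt_or_eq with h | h
    · simpa [hg, dif_pos h] using (hlim R h).choose_spec
    · subst h
      have hgR : g 0 = y := by simp [hg]
      rw [hgR]
      refine tendsto_const_nhds.congr' ?_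
      filter_upwards [eventually_ge_atTop 1] with k hk
      exact ((hγ k hk).2).symm
  have hg0 : g 0 = y := by simp [hg]
  refine ⟨g, ?_, hg0, ?_⟩
  · -- geodesic ray
    intro s t hs ht
    have h1 : Tendsto (fun k => dist (γ k s) (γ k t)) atTop
        (𝓝 (dist (g s) (g t))) := (hglim s hs).dist (hglim t ht)
    have h2 : Tendsto (fun k => dist (γ k s) (γ k t)) atTop (𝓝 |s - t|) := by
      refine tendsto_const_nhds.congr' ?_
      filter_upwards [hLtop.eventually_ge_atTop (max s t), eventually_ge_atTop 1]
        with k hk hk1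
      exact ((hγ k hk1).1 s ⟨hs, (le_max_left s t).trans hk⟩
        t ⟨ht, (le_max_right s t).trans hk⟩).symm
    exact tendsto_nhds_unique h1 h2
  · -- the approximation bound
    intro R hR i hi hRL
    have h1 : Tendsto (fun k => dist (γ k R) (γ i R)) atTop
        (𝓝 (dist (g R) (γ i R))) := (hglim R hR.le).dist tendsto_const_nhds
    refine le_of_tendsto h1 ?_
    filter_upwards [eventually_ge_atTop i] with k hk
    have := tele R hR i hi hRL k hk
    have h2 : (0:ℝ) ≤ R / 2 ^ k := by positivity
    linarith
end

section
/- Let Y be a Busemann convex geodesic space, y ∈ Y, A > 0, (z_n) a sequence in Y, and let γ, γ' : [0,∞) → Y be geodesic rays with γ(0) = γ'(0) = y. If lim_{n→∞} (1/n)·d(γ(A·n), z_n) = 0 and lim_{n→∞} (1/n)·d(γ'(A·n), z_n) = 0, then γ = γ'. -/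
open Set Filter MeasureTheory

/-- Uniqueness of the approximating geodesic ray in a Busemann convex geodesic space. -/
theorem ray_unique
    {Y : Type*} [MetricSpace Y]
    (hgeo : GeodesicSpace Y) (hbus : BusemannConvex Y)
    (y : Y) (A : ℝ) (hA : 0 < A) (z : ℕ → Y)
    (γ γ' : ℝ → Y) (hγ : IsGeodesicRay γ) (hγ' : IsGeodesicRay γ')
    (h0 : γ 0 = y) (h0' : γ' 0 = y)
    (hlim : Tendsto (fun n : ℕ => dist (γ (A * n)) (z n) / n) atTop (nhds 0))
    (hlim' : Tendsto (fun n : ℕ => dist (γ' (A * n)) (z n) / n) atTop (nhds 0)) :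
    Set.EqOn γ γ' (Set.Ici 0) := by
  intro t ht
  have ht : (0:ℝ) ≤ t := ht
  have key : ∀ n : ℕ, t ≤ A * n → 0 < (n:ℝ) →
      dist (γ t) (γ' t) ≤ (t / A) * (dist (γ (A * n)) (z n) / n + dist (γ' (A * n)) (z n) / n) := by
    intro n hn hnpos
    have hAn : (0:ℝ) < A * n := mul_pos hA hnpos
    have hpath : IsGeodesicPath (A * n) γ := fun s hs u hu => hγ s u hs.1 hu.1
    have hpath' : IsGeodesicPath (A * n) γ' := fun s hs u hu => hγ' s u hs.1 hu.1
    have hmem : t / (A * n) ∈ Set.Icc (0:ℝ) 1 :=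
      ⟨div_nonneg ht hAn.le, (div_le_one hAn).mpr hn⟩
    have hb := hbus (A * n) (A * n) γ γ' hAn.le hAn.le hpath hpath' (by rw [h0, h0'])
      (t / (A * n)) hmem
    rw [div_mul_cancel₀ _ hAn.ne'] at hb
    have htri : dist (γ (A * n)) (γ' (A * n)) ≤
        dist (γ (A * n)) (z n) + dist (γ' (A * n)) (z n) := by
      calc dist (γ (A * n)) (γ' (A * n)) ≤ dist (γ (A * n)) (z n) + dist (z n) (γ' (A * n)) :=
            dist_triangle _ _ _
        _ = dist (γ (A * n)) (z n) + dist (γ' (A * n)) (z n) := by rw [dist_comm (z n)]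
    calc dist (γ t) (γ' t) ≤ t / (A * n) * dist (γ (A * n)) (γ' (A * n)) := hb
      _ ≤ t / (A * n) * (dist (γ (A * n)) (z n) + dist (γ' (A * n)) (z n)) := by
          apply mul_le_mul_of_nonneg_left htri (div_nonneg ht hAn.le)
      _ = (t / A) * (dist (γ (A * n)) (z n) / n + dist (γ' (A * n)) (z n) / n) := by
          field_simp
  have hdist : dist (γ t) (γ' t) ≤ 0 := by
    have hlim2 : Tendsto (fun n : ℕ => (t / A) *
        (dist (γ (A * n)) (z n) / n + dist (γ' (A * n)) (z n) / n)) atTop (nhds 0) := by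
      have := (hlim.add hlim').const_mul (t / A)
      simpa using this
    refine ge_of_tendsto hlim2 ?_
    filter_upwards [eventually_ge_atTop (⌈t / A⌉₊ + 1)] with n hn
    have hnpos : 0 < (n:ℝ) := by
      have : 1 ≤ n := le_trans (Nat.le_add_left 1 _) hn
      exact_mod_cast this
    have hn2 : t ≤ A * n := by
      have h1 : (⌈t / A⌉₊ : ℝ) ≤ n := by exact_mod_cast le_trans (Nat.le_add_right _ 1) hn
      have h2 : t / A ≤ n := le_trans (Nat.le_ceil _) h1
      calc t = A * (t / A) := by field_simp
        _ ≤ A * n := by nlinarith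
    exact key n hn2 hnpos
  have := dist_nonneg (x := γ t) (y := γ' t)
  have : dist (γ t) (γ' t) = 0 := le_antisymm hdist this
  exact dist_eq_zero.mp this
end
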